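/- arXiv:math/0703349 — 7 statements merged into one kernel-verified Lean document; each statement's English description precedes it below -/
import Mathlib

section
/- Let A : ℝ^d → ℝ^d be an expansive linear map and E ⊆ ℝ^d a measurable set. If for some single radius r₀ > 0 one has lim_{j→∞} |E ∩ A^{-j}B_{r₀}|_d / |A^{-j}B_{r₀}|_d = 1, then E ∈ 𝓔_A, i.e. the same limit equals 1 for every r > 0. Conversely, if this limit fails to be 1 for some r₀ > 0, then E ∉ 𝓔_A. -/
open MeasureTheory Filter Metric Topology

noncomputable section

/-- A linear map of `ℝ^d` is expansive if every complex eigenvalue (i.e. every complex root of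
its characteristic polynomial) has absolute value greater than 1. -/
def IsExpansive {d : ℕ} (A : EuclideanSpace ℝ (Fin d) →ₗ[ℝ] EuclideanSpace ℝ (Fin d)) : Prop :=
  ∀ z : ℂ, (Polynomial.map (algebraMap ℝ ℂ) (LinearMap.charpoly A)).IsRoot z →
    1 < ‖z‖

/-- The origin is a point of `A`-density for `E`: for every `r > 0`,
`|E ∩ A⁻ʲB_r| / |A⁻ʲB_r| → 1` as `j → ∞`. -/
def HasADensityZero {d : ℕ} (A : EuclideanSpace ℝ (Fin d) →ₗ[ℝ] EuclideanSpace ℝ (Fin d))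
    (E : Set (EuclideanSpace ℝ (Fin d))) : Prop :=
  ∀ r : ℝ, 0 < r →
    Tendsto (fun j : ℕ =>
        volume (E ∩ ⇑(A ^ j) ⁻¹' ball (0 : EuclideanSpace ℝ (Fin d)) r) /
          volume (⇑(A ^ j) ⁻¹' ball (0 : EuclideanSpace ℝ (Fin d)) r))
      atTop (𝓝 1)

/-- The family `𝓔_A` of measurable sets having the origin as a point of `A`-density. -/
def densityFamily {d : ℕ} (A : EuclideanSpace ℝ (Fin d) →ₗ[ℝ] EuclideanSpace ℝ (Fin d)) :
    Set (Set (EuclideanSpace ℝ (Fin d))) :=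
  {E | MeasurableSet E ∧ HasADensityZero A E}

open scoped ENNReal NNReal

lemma det_ne_zero_of_expansive {d : ℕ} {A : EuclideanSpace ℝ (Fin d) →ₗ[ℝ] EuclideanSpace ℝ (Fin d)}
    (hA : IsExpansive A) : LinearMap.det A ≠ 0 := by
  intro h
  have hc : (LinearMap.charpoly A).coeff 0 = 0 := by
    have := LinearMap.det_eq_sign_charpoly_coeff A
    rw [h] at this
    have h2 : ((-1 : ℝ) ^ Module.finrank ℝ (EuclideanSpace ℝ (Fin d))) ≠ 0 := by positivity
    exact (mul_eq_zero.mp this.symm).resolve_left h2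
  have hroot : (Polynomial.map (algebraMap ℝ ℂ) (LinearMap.charpoly A)).IsRoot 0 := by
    have : (Polynomial.map (algebraMap ℝ ℂ) (LinearMap.charpoly A)).coeff 0 = 0 := by
      rw [Polynomial.coeff_map, hc, map_zero]
    rwa [Polynomial.IsRoot, ← Polynomial.coeff_zero_eq_eval_zero]
  have := hA 0 hroot
  norm_num at this

lemma exists_pow_norm_lt {𝔸 : Type*} [NormedRing 𝔸] [NormedAlgebra ℂ 𝔸] [CompleteSpace 𝔸]
    (a : 𝔸) (h : spectralRadius ℂ a < 1) {ε : ℝ} (hε : 0 < ε) : ∃ k : ℕ, ‖a ^ k‖ < ε := by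
  obtain ⟨ρ, hρ1, hρ2⟩ := exists_between h
  have T := spectrum.pow_nnnorm_pow_one_div_tendsto_nhds_spectralRadius a
  have hev : ∀ᶠ n : ℕ in atTop, (‖a ^ n‖₊ : ℝ≥0∞) ^ (1 / (n : ℝ)) < ρ :=
    T.eventually_lt_const hρ1
  have hpow : Tendsto (fun n : ℕ => ρ ^ n) atTop (𝓝 0) :=
    ENNReal.tendsto_pow_atTop_nhds_zero_of_lt_one hρ2
  have hev2 : ∀ᶠ n : ℕ in atTop, ρ ^ n < ENNReal.ofReal ε :=
    hpow.eventually_lt_const (ENNReal.ofReal_pos.mpr hε)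
  obtain ⟨n, ⟨hn1, hn2⟩, hn3⟩ := ((hev.and hev2).and (eventually_ge_atTop 1)).exists
  refine ⟨n, ?_⟩
  have hnR : (1 / (n : ℝ)) * (n : ℝ) = 1 := by
    field_simp
  have hle : (‖a ^ n‖₊ : ℝ≥0∞) ≤ ρ ^ n := by
    have := ENNReal.rpow_le_rpow hn1.le (by positivity : (0:ℝ) ≤ (n:ℝ))
    rwa [← ENNReal.rpow_mul, hnR, ENNReal.rpow_one, ENNReal.rpow_natCast] at this
  have : (‖a ^ n‖₊ : ℝ≥0∞) < ENNReal.ofReal ε := lt_of_le_of_lt hle hn2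
  rw [show (‖a ^ n‖₊ : ℝ≥0∞) = ENNReal.ofReal ‖a ^ n‖ from (ofReal_norm _).symm] at this
  exact (ENNReal.ofReal_lt_ofReal_iff hε).mp this

section Spectral
variable {d : ℕ}

local notation "𝔼" => EuclideanSpace ℝ (Fin d)
local notation "𝔼c" => EuclideanSpace ℂ (Fin d)

/-- The algebra homomorphism from complex matrices to continuous linear endomorphisms. -/
def matCLM (d : ℕ) : Matrix (Fin d) (Fin d) ℂ →ₐ[ℂ] (EuclideanSpace ℂ (Fin d) →L[ℂ] EuclideanSpace ℂ (Fin d)) :=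
  AlgHom.ofLinearMap
    ((LinearMap.toContinuousLinearMap :
        (EuclideanSpace ℂ (Fin d) →ₗ[ℂ] EuclideanSpace ℂ (Fin d)) ≃ₗ[ℂ]
          (EuclideanSpace ℂ (Fin d) →L[ℂ] EuclideanSpace ℂ (Fin d))).toLinearMap ∘ₗ
      (Matrix.toEuclideanLin :
        Matrix (Fin d) (Fin d) ℂ ≃ₗ[ℂ] _).toLinearMap)
    (by
      ext x
      simp [Matrix.toEuclideanLin_eq_toLin, Matrix.toLin_one])
    (by
      intro P Q
      ext x
      simp [Matrix.toEuclideanLin_eq_toLin, Matrix.toLin_mul _ (PiLp.basisFun 2 ℂ (Fin d)),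
        ContinuousLinearMap.mul_apply])

lemma matCLM_apply (P : Matrix (Fin d) (Fin d) ℂ) (v : 𝔼c) :
    matCLM d P v = Matrix.toEuclideanLin P v := rfl

/-- complexification of a real Euclidean vector -/
def cplx {d : ℕ} (y : EuclideanSpace ℝ (Fin d)) : EuclideanSpace ℂ (Fin d) :=
  (WithLp.equiv 2 (Fin d → ℂ)).symm fun i => (y i : ℂ)

lemma norm_cplx (y : 𝔼) : ‖cplx y‖ = ‖y‖ := by
  rw [EuclideanSpace.norm_eq, EuclideanSpace.norm_eq]
  congr 1
  refine Finset.sum_congr rfl fun i _ => ?_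
  simp [cplx]

lemma charpoly_eval_eq_det {n : Type*} [Fintype n] [DecidableEq n]
    (W : Matrix n n ℂ) (z : ℂ) :
    W.charpoly.eval z = (algebraMap ℂ (Matrix n n ℂ) z - W).det := by
  have h1 : W.charpoly.eval z = Polynomial.evalRingHom z W.charmatrix.det := rfl
  rw [h1, RingHom.map_det]
  congr 1
  ext i j
  by_cases h : i = j
  · subst h
    simp [Matrix.charmatrix_apply, Matrix.algebraMap_matrix_apply]
  · simp [Matrix.charmatrix_apply, Matrix.algebraMap_matrix_apply, h,
      Matrix.diagonal_apply_ne _ h]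

lemma exists_preimage_ball_subset (hd : 1 ≤ d)
    {A : EuclideanSpace ℝ (Fin d) →ₗ[ℝ] EuclideanSpace ℝ (Fin d)} (hA : IsExpansive A)
    {r r' : ℝ} (hr : 0 < r) (hr' : 0 < r') :
    ∃ k : ℕ, ⇑(A ^ k) ⁻¹' ball (0 : 𝔼) r ⊆ ball (0 : 𝔼) r' := by
  classical
  set b : Module.Basis (Fin d) ℝ 𝔼 := PiLp.basisFun 2 ℝ (Fin d) with hb
  set M : Matrix (Fin d) (Fin d) ℝ := LinearMap.toMatrix b b A with hM
  set φ : ℝ →+* ℂ := (algebraMap ℝ ℂ) with hφ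
  set Mc : Matrix (Fin d) (Fin d) ℂ := M.map φ with hMc
  -- characteristic polynomial
  have hchar : Mc.charpoly = Polynomial.map φ (LinearMap.charpoly A) := by
    rw [hMc, Matrix.charpoly_map, hM, LinearMap.charpoly_toMatrix]
  have hroot : ∀ z : ℂ, Mc.charpoly.IsRoot z → 1 < ‖z‖ := by
    intro z hz
    exact hA z (by rwa [hchar] at hz)
  have hspecM : ∀ z ∈ spectrum ℂ Mc, 1 < ‖z‖ := by
    intro z hz
    apply hroot
    have h1 : ¬ IsUnit (algebraMap ℂ (Matrix (Fin d) (Fin d) ℂ) z - Mc) := hz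
    rw [Matrix.isUnit_iff_isUnit_det, isUnit_iff_ne_zero, not_not] at h1
    rw [Polynomial.IsRoot, charpoly_eval_eq_det, h1]
  -- invertibility
  have hdet : M.det ≠ 0 := by
    rw [hM, LinearMap.det_toMatrix]
    exact det_ne_zero_of_expansive hA
  set N : Matrix (Fin d) (Fin d) ℝ := M⁻¹ with hN
  have hMN : M * N = 1 := Matrix.mul_nonsing_inv M (isUnit_iff_ne_zero.mpr hdet)
  have hNM : N * M = 1 := Matrix.nonsing_inv_mul M (isUnit_iff_ne_zero.mpr hdet)
  set Nc : Matrix (Fin d) (Fin d) ℂ := N.map φ with hNc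
  have hMcNc : Mc * Nc = 1 := by
    rw [hMc, hNc, ← Matrix.map_mul, hMN, Matrix.map_one φ (map_zero φ) (map_one φ)]
  have hNcMc : Nc * Mc = 1 := by
    rw [hMc, hNc, ← Matrix.map_mul, hNM, Matrix.map_one φ (map_zero φ) (map_one φ)]
  set uM : (Matrix (Fin d) (Fin d) ℂ)ˣ := ⟨Mc, Nc, hMcNc, hNcMc⟩ with huM
  -- spectrum of the inverse is small
  have hsmall : ∀ z ∈ spectrum ℂ (matCLM d Nc), ‖z‖₊ < 1 := by
    intro z hz
    have hz' : z ∈ spectrum ℂ Nc := AlgHom.spectrum_apply_subset (matCLM d) Nc hz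
    have hz0 : z ≠ 0 := by
      intro h0
      rw [h0] at hz'
      exact (spectrum.zero_mem_iff ℂ).mp hz' ⟨uM⁻¹, rfl⟩
    have hinv : z⁻¹ ∈ spectrum ℂ Mc := by
      have := (spectrum.inv_mem_iff (r := Units.mk0 z hz0) (a := uM⁻¹)).mp hz'
      rwa [inv_inv] at this
    have h1 : 1 < ‖z⁻¹‖ := hspecM _ hinv
    rw [norm_inv] at h1
    have habs : ‖z‖ < 1 := by
      have hpos : 0 < ‖z‖ := norm_pos_iff.mpr hz0
      exact (one_lt_inv₀ hpos).mp h1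
    rw [← NNReal.coe_lt_coe]
    simpa [coe_nnnorm] using habs
  -- spectral radius
  haveI : Nonempty (Fin d) := ⟨⟨0, Nat.lt_of_lt_of_le Nat.zero_lt_one hd⟩⟩
  haveI : Nontrivial 𝔼c := inferInstance
  haveI : Nontrivial (𝔼c →L[ℂ] 𝔼c) := by
    obtain ⟨x, hx⟩ := exists_ne (0 : 𝔼c)
    refine ⟨1, 0, fun h => hx ?_⟩
    have := congrFun (congrArg (fun f : 𝔼c →L[ℂ] 𝔼c => (f : 𝔼c → 𝔼c)) h) x
    simpa using this
  have hrad : spectralRadius ℂ (matCLM d Nc) < 1 := by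
    have := spectrum.spectralRadius_lt_of_forall_lt_of_nonempty
      (spectrum.nonempty (matCLM d Nc)) (r := 1) (fun k hk => hsmall k hk)
    simpa using this
  obtain ⟨k, hk⟩ := exists_pow_norm_lt (matCLM d Nc) hrad (div_pos hr' hr)
  refine ⟨k, ?_⟩
  -- bridge between real and complex
  have key1 : ∀ (P : Matrix (Fin d) (Fin d) ℝ) (y : 𝔼),
      matCLM d (P.map φ) (cplx y) = cplx (Matrix.toEuclideanLin P y) := by
    intro P y
    apply (WithLp.equiv 2 (Fin d → ℂ)).injective
    funext i
    simp [matCLM_apply, cplx, Matrix.toEuclideanLin_apply, Matrix.mulVec, dotProduct,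
      Matrix.map_apply, hφ, Complex.coe_algebraMap]
  have key2 : Matrix.toEuclideanLin M = A := by
    rw [Matrix.toEuclideanLin_eq_toLin, hM, Matrix.toLin_toMatrix]
  have key3 : ∀ (m : ℕ) (y : 𝔼), matCLM d (Mc ^ m) (cplx y) = cplx ((A ^ m) y) := by
    intro m
    induction m with
    | zero => intro y; simp
    | succ m ih =>
      intro y
      rw [pow_succ, map_mul, ContinuousLinearMap.mul_apply]
      have h1 : matCLM d Mc (cplx y) = cplx (A y) := by
        rw [hMc, key1, key2]
      rw [h1, ih (A y)]
      congr 1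
  intro x hx
  rw [Set.mem_preimage, mem_ball_zero_iff] at hx
  rw [mem_ball_zero_iff]
  -- Nc^k * Mc^k = 1
  have hcomm : Commute Nc Mc := by
    unfold Commute SemiconjBy
    rw [hNcMc, hMcNc]
  have hNkMk : Nc ^ k * Mc ^ k = 1 := by
    rw [← hcomm.mul_pow, hNcMc, one_pow]
  have hxeq : matCLM d (Nc ^ k) (cplx ((A ^ k) x)) = cplx x := by
    rw [← key3 k x, ← ContinuousLinearMap.mul_apply, ← map_mul, hNkMk, map_one,
      ContinuousLinearMap.one_apply]
  calc ‖x‖ = ‖matCLM d (Nc ^ k) (cplx ((A ^ k) x))‖ := by rw [hxeq, norm_cplx]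
    _ ≤ ‖matCLM d (Nc ^ k)‖ * ‖cplx ((A ^ k) x)‖ := ContinuousLinearMap.le_opNorm _ _
    _ ≤ ‖matCLM d (Nc ^ k)‖ * r := by
        refine mul_le_mul_of_nonneg_left ?_ (norm_nonneg _)
        rw [norm_cplx]
        exact hx.le
    _ < (r' / r) * r := by
        refine mul_lt_mul_of_pos_right ?_ hr
        rw [map_pow]
        exact hk
    _ = r' := div_mul_cancel₀ r' (ne_of_gt hr)

end Spectral

section MeasurePart
variable {d : ℕ}
local notation "𝔼" => EuclideanSpace ℝ (Fin d)

lemma tendsto_ratio_of_tendsto_ratio (hd : 1 ≤ d)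
    {A : EuclideanSpace ℝ (Fin d) →ₗ[ℝ] EuclideanSpace ℝ (Fin d)} (hA : IsExpansive A)
    {E : Set 𝔼} (hE : MeasurableSet E) {r₀ r : ℝ} (hr₀ : 0 < r₀) (hr : 0 < r)
    (H : Tendsto (fun j : ℕ => volume (E ∩ ⇑(A ^ j) ⁻¹' ball (0 : 𝔼) r₀) /
          volume (⇑(A ^ j) ⁻¹' ball (0 : 𝔼) r₀)) atTop (𝓝 1)) :
    Tendsto (fun j : ℕ => volume (E ∩ ⇑(A ^ j) ⁻¹' ball (0 : 𝔼) r) /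
          volume (⇑(A ^ j) ⁻¹' ball (0 : 𝔼) r)) atTop (𝓝 1) := by
  classical
  set S : ℕ → ℝ → Set 𝔼 := fun j s => ⇑(A ^ j) ⁻¹' ball (0 : 𝔼) s with hS
  set ν : ℕ → ℝ → ℝ≥0∞ := fun j s => volume (S j s) with hνdef
  have hdet : LinearMap.det A ≠ 0 := det_ne_zero_of_expansive hA
  have hdetj : ∀ j : ℕ, LinearMap.det (A ^ j) ≠ 0 := by
    intro j
    rw [map_pow LinearMap.det A j]
    exact pow_ne_zero _ hdet
  set a : ℝ≥0∞ := ENNReal.ofReal |(LinearMap.det A)⁻¹| with ha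
  have ha0 : a ≠ 0 := by
    rw [ha, Ne, ENNReal.ofReal_eq_zero, not_le]
    exact abs_pos.mpr (inv_ne_zero hdet)
  have hat : a ≠ ⊤ := ENNReal.ofReal_ne_top
  have hν : ∀ (j : ℕ) (s : ℝ), ν j s = a ^ j * volume (ball (0 : 𝔼) s) := by
    intro j s
    have h1 : ν j s = ENNReal.ofReal |(LinearMap.det (A ^ j))⁻¹| * volume (ball (0 : 𝔼) s) :=
      Measure.addHaar_preimage_linearMap volume (hdetj j) _
    rw [h1, map_pow LinearMap.det A j, ← inv_pow, abs_pow, ENNReal.ofReal_pow (abs_nonneg _), ha]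
  have hball0 : ∀ s : ℝ, 0 < s → volume (ball (0 : 𝔼) s) ≠ 0 :=
    fun s hs => (measure_ball_pos volume 0 hs).ne'
  have hballt : ∀ s : ℝ, volume (ball (0 : 𝔼) s) ≠ ⊤ := fun s => measure_ball_lt_top.ne
  have hν0 : ∀ (j : ℕ) (s : ℝ), 0 < s → ν j s ≠ 0 := by
    intro j s hs
    rw [hν]
    exact mul_ne_zero (pow_ne_zero _ ha0) (hball0 s hs)
  have hνt : ∀ (j : ℕ) (s : ℝ), ν j s ≠ ⊤ := by
    intro j s
    rw [hν]
    exact ENNReal.mul_ne_top (ENNReal.pow_ne_top hat) (hballt s)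
  have hsum : ∀ (j : ℕ) (s : ℝ), 0 < s →
      volume (E ∩ S j s) / ν j s + volume (S j s \ E) / ν j s = 1 := by
    intro j s hs
    rw [ENNReal.div_add_div_same, Set.inter_comm, measure_inter_add_diff (S j s) hE]
    exact ENNReal.div_self (hν0 j s hs) (hνt j s)
  have hgf : ∀ (j : ℕ) (s : ℝ), 0 < s →
      volume (S j s \ E) / ν j s = 1 - volume (E ∩ S j s) / ν j s := by
    intro j s hs
    refine ENNReal.eq_sub_of_add_eq ?_ (by rw [add_comm]; exact hsum j s hs)
    exact (ENNReal.div_lt_top (ne_top_of_le_ne_top (hνt j s)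
      (measure_mono Set.inter_subset_right)) (hν0 j s hs)).ne
  have hfg : ∀ (j : ℕ) (s : ℝ), 0 < s →
      volume (E ∩ S j s) / ν j s = 1 - volume (S j s \ E) / ν j s := by
    intro j s hs
    refine ENNReal.eq_sub_of_add_eq ?_ (hsum j s hs)
    exact (ENNReal.div_lt_top (ne_top_of_le_ne_top (hνt j s)
      (measure_mono Set.diff_subset)) (hν0 j s hs)).ne
  -- Step 1 : the difference ratio tends to 0 at radius r₀
  have G : Tendsto (fun j : ℕ => volume (S j r₀ \ E) / ν j r₀) atTop (𝓝 0) := by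
    have h2 : Tendsto (fun j : ℕ => 1 - volume (E ∩ S j r₀) / ν j r₀) atTop (𝓝 (1 - 1)) :=
      ((ENNReal.continuous_sub_left ENNReal.one_ne_top).tendsto 1).comp H
    rw [tsub_self] at h2
    exact h2.congr fun j => (hgf j r₀ hr₀).symm
  -- Step 2 : transfer to radius r
  obtain ⟨k, hk⟩ := exists_preimage_ball_subset hd hA hr hr₀
  have hsub : ∀ j : ℕ, k ≤ j → S j r ⊆ S (j - k) r₀ := by
    intro j hkj x hx
    have h1 : (A ^ k) ((A ^ (j - k)) x) = (A ^ j) x := by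
      rw [← Module.End.mul_apply, ← pow_add, Nat.add_sub_cancel' hkj]
    have h2 : (A ^ (j - k)) x ∈ ⇑(A ^ k) ⁻¹' ball (0 : 𝔼) r := by
      rw [Set.mem_preimage, h1]
      exact hx
    exact hk h2
  set C : ℝ≥0∞ := volume (ball (0 : 𝔼) r₀) / (a ^ k * volume (ball (0 : 𝔼) r)) with hC
  have hCt : C ≠ ⊤ := by
    rw [hC]
    exact (ENNReal.div_lt_top (hballt r₀) (mul_ne_zero (pow_ne_zero _ ha0) (hball0 r hr))).ne
  have hratio : ∀ j : ℕ, k ≤ j → ν (j - k) r₀ / ν j r = C := by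
    intro j hkj
    rw [hν, hν, show a ^ j = a ^ (j - k) * a ^ k by rw [← pow_add]; congr 1; omega, mul_assoc]
    exact ENNReal.mul_div_mul_left _ _ (pow_ne_zero _ ha0) (ENNReal.pow_ne_top hat)
  have hbound : ∀ j : ℕ, k ≤ j →
      volume (S j r \ E) / ν j r ≤ C * (volume (S (j - k) r₀ \ E) / ν (j - k) r₀) := by
    intro j hkj
    have h1 : volume (S j r \ E) / ν j r ≤ volume (S (j - k) r₀ \ E) / ν j r :=
      ENNReal.div_le_div_right (measure_mono (Set.diff_subset_diff_left (hsub j hkj))) _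
    have h2 : volume (S (j - k) r₀ \ E) / ν j r =
        (volume (S (j - k) r₀ \ E) / ν (j - k) r₀) * (ν (j - k) r₀ / ν j r) := by
      rw [div_eq_mul_inv, div_eq_mul_inv, div_eq_mul_inv, mul_assoc]
      congr 1
      rw [← mul_assoc, ENNReal.inv_mul_cancel (hν0 _ r₀ hr₀) (hνt _ r₀), one_mul]
    rw [h2, hratio j hkj, mul_comm] at h1
    exact h1
  have hlim : Tendsto (fun j : ℕ => C * (volume (S (j - k) r₀ \ E) / ν (j - k) r₀))
      atTop (𝓝 0) := by
    have h1 : Tendsto (fun j : ℕ => volume (S (j - k) r₀ \ E) / ν (j - k) r₀) atTop (𝓝 0) :=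
      G.comp (tendsto_sub_atTop_nat k)
    have h2 := ENNReal.Tendsto.const_mul h1 (Or.inr hCt)
    rwa [mul_zero] at h2
  have Gr : Tendsto (fun j : ℕ => volume (S j r \ E) / ν j r) atTop (𝓝 0) :=
    tendsto_of_tendsto_of_tendsto_of_le_of_le' tendsto_const_nhds hlim
      (Filter.Eventually.of_forall fun j => zero_le)
      (eventually_atTop.mpr ⟨k, hbound⟩)
  -- Step 3 : conclude
  have h3 : Tendsto (fun j : ℕ => 1 - volume (S j r \ E) / ν j r) atTop (𝓝 (1 - 0)) :=
    ((ENNReal.continuous_sub_left ENNReal.one_ne_top).tendsto 0).comp Gr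
  rw [tsub_zero] at h3
  exact h3.congr fun j => (hfg j r hr).symm

end MeasurePart

theorem stmt_3 {d : ℕ} (hd : 1 ≤ d)
    (A : EuclideanSpace ℝ (Fin d) →ₗ[ℝ] EuclideanSpace ℝ (Fin d)) (hA : IsExpansive A)
    (E : Set (EuclideanSpace ℝ (Fin d))) (hE : MeasurableSet E)
    (r₀ : ℝ) (hr₀ : 0 < r₀) :
    (Tendsto (fun j : ℕ =>
        volume (E ∩ ⇑(A ^ j) ⁻¹' ball (0 : EuclideanSpace ℝ (Fin d)) r₀) /
          volume (⇑(A ^ j) ⁻¹' ball (0 : EuclideanSpace ℝ (Fin d)) r₀)) atTop (𝓝 1) →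
      E ∈ densityFamily A) ∧
    (¬ Tendsto (fun j : ℕ =>
        volume (E ∩ ⇑(A ^ j) ⁻¹' ball (0 : EuclideanSpace ℝ (Fin d)) r₀) /
          volume (⇑(A ^ j) ⁻¹' ball (0 : EuclideanSpace ℝ (Fin d)) r₀)) atTop (𝓝 1) →
      E ∉ densityFamily A) := by
  constructor
  · intro H
    refine ⟨hE, fun r hrpos => ?_⟩
    exact tendsto_ratio_of_tendsto_ratio hd hA hE hr₀ hrpos H
  · intro hnot hmem
    exact hnot (hmem.2 r₀ hr₀)
end
end

section
/- Let A : ℝ^d → ℝ^d be an expansive linear map, E ⊆ ℝ^d a measurable set, and K ⊆ ℝ^d a measurable set for which there exist 0 < r₁ < r₂ < ∞ with B_{r₁} ⊆ K ⊆ B_{r₂}. Then E ∈ 𝓔_A if and only if lim_{j→∞} |E ∩ A^{-j}K|_d / |A^{-j}K|_d = 1, or equivalently lim_{j→∞} |E^c ∩ A^{-j}K|_d / |A^{-j}K|_d = 0. -/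
open MeasureTheory Filter Metric Topology
open scoped ENNReal NNReal

noncomputable section

section Aux

open ENNReal

private lemma aux_tendsto_iff {f g : ℕ → ℝ≥0∞} (h : ∀ j, f j + g j = 1) :
    Tendsto f atTop (𝓝 1) ↔ Tendsto g atTop (𝓝 0) := by
  have hf1 : ∀ j, f j ≠ ⊤ := fun j =>
    ((le_self_add.trans (h j).le).trans_lt ENNReal.one_lt_top).ne
  have hg1 : ∀ j, g j ≠ ⊤ := fun j =>
    ((le_add_self.trans (h j).le).trans_lt ENNReal.one_lt_top).ne
  have hgf : ∀ j, g j = 1 - f j := fun j =>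
    (ENNReal.sub_eq_of_eq_add (hf1 j) (by rw [← h j, add_comm])).symm
  have hfg : ∀ j, f j = 1 - g j := fun j =>
    (ENNReal.sub_eq_of_eq_add (hg1 j) (by rw [← h j])).symm
  have hcont : Continuous (fun x : ℝ≥0∞ => 1 - x) :=
    ENNReal.continuous_sub_left ENNReal.one_ne_top
  constructor
  · intro h1
    have h2 : Tendsto (fun j => 1 - f j) atTop (𝓝 (1 - 1)) := (hcont.tendsto 1).comp h1
    simp only [tsub_self] at h2
    exact h2.congr fun j => (hgf j).symm
  · intro h0
    have h2 : Tendsto (fun j => 1 - g j) atTop (𝓝 (1 - 0)) := (hcont.tendsto 0).comp h0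
    simp only [tsub_zero] at h2
    exact h2.congr fun j => (hfg j).symm

private lemma aux_div_le {a b x y : ℝ≥0∞} (hab : a ≤ b) (hy0 : y ≠ 0) (hyt : y ≠ ⊤) :
    a / x ≤ y / x * (b / y) := by
  have hkey : y / x * (b / y) = b / x := by
    rw [div_eq_mul_inv, div_eq_mul_inv, div_eq_mul_inv]
    calc y * x⁻¹ * (b * y⁻¹) = b * x⁻¹ * (y * y⁻¹) := by ring
    _ = b * x⁻¹ := by rw [ENNReal.mul_inv_cancel hy0 hyt, mul_one]
  rw [hkey]
  exact ENNReal.div_le_div_right hab x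

/-- An expansive map has nonzero determinant, and high powers of its inverse are strongly
contracting. -/
private lemma aux_expansive_contract {d : ℕ} (hd : 1 ≤ d)
    (A : EuclideanSpace ℝ (Fin d) →ₗ[ℝ] EuclideanSpace ℝ (Fin d)) (hA : IsExpansive A) :
    LinearMap.det A ≠ 0 ∧
      ∀ r ρ : ℝ, 0 < r → 0 < ρ → ∃ m : ℕ,
        ∀ x : EuclideanSpace ℝ (Fin d), ‖(A ^ m) x‖ < r → ‖x‖ < ρ := by
  classical
  set b : Module.Basis (Fin d) ℝ (EuclideanSpace ℝ (Fin d)) :=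
    (EuclideanSpace.basisFun (Fin d) ℝ).toBasis with hb
  set M : Matrix (Fin d) (Fin d) ℝ := LinearMap.toMatrix b b A with hM
  set Mc : Matrix (Fin d) (Fin d) ℂ := M.map (algebraMap ℝ ℂ) with hMc
  -- every element of the spectrum of `Mc` is a root of the complexified charpoly
  have hroot : ∀ z ∈ spectrum ℂ Mc,
      (Polynomial.map (algebraMap ℝ ℂ) (LinearMap.charpoly A)).IsRoot z := by
    intro z hz
    set bc : Module.Basis (Fin d) ℂ (Fin d → ℂ) := Pi.basisFun ℂ (Fin d) with hbc
    rw [← AlgEquiv.spectrum_eq (Matrix.toLinAlgEquiv bc) Mc,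
      ← Module.End.hasEigenvalue_iff_mem_spectrum] at hz
    have hmin : (minpoly ℂ (Matrix.toLinAlgEquiv bc Mc)).IsRoot z :=
      Module.End.hasEigenvalue_iff_isRoot.mp hz
    have hdvd := LinearMap.minpoly_dvd_charpoly (Matrix.toLinAlgEquiv bc Mc)
    have hcp : LinearMap.charpoly (Matrix.toLinAlgEquiv bc Mc)
        = Polynomial.map (algebraMap ℝ ℂ) (LinearMap.charpoly A) := by
      have h1 : (LinearMap.toMatrix bc bc (Matrix.toLinAlgEquiv bc Mc)) = Mc := by
        rw [show (Matrix.toLinAlgEquiv bc) Mc = Matrix.toLin bc bc Mc from rfl,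
          LinearMap.toMatrix_toLin]
      rw [← LinearMap.charpoly_toMatrix (Matrix.toLinAlgEquiv bc Mc) bc, h1,
        Matrix.charpoly_map, LinearMap.charpoly_toMatrix A b]
    rw [← hcp]
    exact hmin.dvd hdvd
  have hspec : ∀ z ∈ spectrum ℂ Mc, 1 < ‖z‖ := fun z hz => hA z (hroot z hz)
  have hMcu : IsUnit Mc := by
    by_contra h
    have := hspec 0 ((spectrum.zero_mem_iff (R := ℂ)).mpr h)
    norm_num at this
  obtain ⟨u, hu⟩ := hMcu
  -- determinant of A is nonzero
  have hdetA : LinearMap.det A ≠ 0 := by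
    have h1 : IsUnit Mc.det := (Matrix.isUnit_iff_isUnit_det Mc).mp ⟨u, hu⟩
    have h2 : Mc.det ≠ 0 := h1.ne_zero
    have h3 : M.det ≠ 0 := by
      intro h
      apply h2
      rw [hMc, ← RingHom.mapMatrix_apply, ← RingHom.map_det, h, map_zero]
    rwa [← LinearMap.det_toMatrix b]
  refine ⟨hdetA, ?_⟩
  -- spectrum of the inverse is inside the open unit disc
  have hinv : ∀ z ∈ spectrum ℂ ((↑u⁻¹ : Matrix (Fin d) (Fin d) ℂ)), ‖z‖₊ < 1 := by
    intro z hz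
    have hz0 : z ≠ 0 := by
      intro h
      exact spectrum.zero_notMem ℂ u⁻¹.isUnit (h ▸ hz)
    have h2 : z⁻¹ ∈ spectrum ℂ ((↑u : Matrix (Fin d) (Fin d) ℂ)) := by
      have := (spectrum.inv_mem_iff (r := Units.mk0 z hz0) (a := u⁻¹)).mp (by simpa using hz)
      simpa using this
    have h3 : 1 < ‖z⁻¹‖ := hspec z⁻¹ (hu ▸ h2)
    rw [norm_inv] at h3
    have h4 : ‖z‖ < 1 := (one_lt_inv_iff₀.mp h3).2
    have h5 : ‖z‖ < 1 := h4
    exact_mod_cast h5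
  -- pass to continuous linear maps on complex Euclidean space
  set T : EuclideanSpace ℂ (Fin d) →L[ℂ] EuclideanSpace ℂ (Fin d) :=
    Matrix.toEuclideanCLM (𝕜 := ℂ) (↑u⁻¹) with hT
  haveI : Nonempty (Fin d) := ⟨⟨0, hd⟩⟩
  haveI hnt : Nontrivial (EuclideanSpace ℂ (Fin d) →L[ℂ] EuclideanSpace ℂ (Fin d)) := by
    refine ⟨0, 1, fun h => ?_⟩
    have := congrArg (fun f : EuclideanSpace ℂ (Fin d) →L[ℂ] EuclideanSpace ℂ (Fin d) =>
      f (EuclideanSpace.single ⟨0, hd⟩ 1) ⟨0, hd⟩) h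
    simp [EuclideanSpace.single_apply] at this
  have hsp : ∀ z ∈ spectrum ℂ T, ‖z‖₊ < 1 := by
    intro z hz
    rw [hT, AlgEquiv.spectrum_eq] at hz
    exact hinv z hz
  have hρ : spectralRadius ℂ T < 1 := by
    have := spectrum.spectralRadius_lt_of_forall_lt T hsp
    simpa using this
  -- Gelfand's formula gives a power with small norm
  have hg := spectrum.pow_nnnorm_pow_one_div_tendsto_nhds_spectralRadius T
  have hev : ∀ᶠ n : ℕ in atTop, ((‖T ^ n‖₊ : ℝ≥0∞) ^ (1 / (n : ℝ))) < 1 :=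
    hg.eventually_lt_const hρ
  obtain ⟨n₀, hn₀1, hn₀⟩ := ((eventually_ge_atTop 1).and hev).exists
  have hTn : ‖T ^ n₀‖ < 1 := by
    by_contra h
    push_neg at h
    have h1 : (1 : ℝ≥0∞) ≤ (‖T ^ n₀‖₊ : ℝ≥0∞) := by
      rw [ENNReal.one_le_coe_iff]
      exact_mod_cast h
    have h2 : (1 : ℝ≥0∞) ≤ (‖T ^ n₀‖₊ : ℝ≥0∞) ^ (1 / (n₀ : ℝ)) := by
      calc (1 : ℝ≥0∞) = 1 ^ (1 / (n₀ : ℝ)) := (ENNReal.one_rpow _).symm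
      _ ≤ _ := ENNReal.rpow_le_rpow h1 (by positivity)
    exact absurd hn₀ (not_lt.mpr h2)
  -- matrix/linear map dictionary
  have hpow : ∀ m : ℕ, LinearMap.toMatrix b b (A ^ m) = M ^ m := by
    intro m
    induction m with
    | zero => simp [pow_zero]
    | succ n ih => rw [pow_succ, pow_succ, LinearMap.toMatrix_mul, ih]
  have hcoord : ∀ (f : EuclideanSpace ℝ (Fin d) →ₗ[ℝ] EuclideanSpace ℝ (Fin d))
      (x : EuclideanSpace ℝ (Fin d)) (i : Fin d),
      f x i = ∑ j, LinearMap.toMatrix b b f i j * x j := by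
    intro f x i
    have h1 : f x = Matrix.toEuclideanLin (LinearMap.toMatrix b b f) x := by
      rw [Matrix.toEuclideanLin_eq_toLin_orthonormal, ← hb, Matrix.toLin_toMatrix]
    rw [h1, Matrix.toEuclideanLin_apply]
    simp [Matrix.mulVec, dotProduct]
  have hbridge : ∀ (f : EuclideanSpace ℝ (Fin d) →ₗ[ℝ] EuclideanSpace ℝ (Fin d))
      (x : EuclideanSpace ℝ (Fin d)),
      Matrix.toEuclideanCLM (𝕜 := ℂ) ((LinearMap.toMatrix b b f).map (algebraMap ℝ ℂ))
        ((WithLp.equiv 2 (Fin d → ℂ)).symm fun i => (x i : ℂ))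
      = (WithLp.equiv 2 (Fin d → ℂ)).symm fun i => (f x i : ℂ) := by
    intro f x
    rw [Matrix.toEuclideanCLM_toLp]
    congr 1
    funext i
    simp only [Matrix.toLin'_apply, Matrix.mulVec, dotProduct, Matrix.map_apply,
      Complex.coe_algebraMap]
    rw [hcoord f x i]
    push_cast
    rfl
  have hnormι : ∀ x : EuclideanSpace ℝ (Fin d),
      ‖(WithLp.equiv 2 (Fin d → ℂ)).symm (fun i => (x i : ℂ))‖ = ‖x‖ := by
    intro x
    rw [EuclideanSpace.norm_eq, EuclideanSpace.norm_eq]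
    congr 1
    refine Finset.sum_congr rfl fun i _ => ?_
    rw [WithLp.equiv_symm_apply, PiLp.toLp_apply, Complex.norm_real]
  -- final contraction estimate
  intro r ρ hr hρpos
  have hδ : 0 < ρ / r := div_pos hρpos hr
  obtain ⟨k, hk1, hk⟩ :=
    ((eventually_ge_atTop 1).and
      ((tendsto_pow_atTop_nhds_zero_of_lt_one (norm_nonneg _) hTn).eventually_lt_const hδ)).exists
  refine ⟨n₀ * k, fun x hx => ?_⟩
  set m := n₀ * k with hm
  have hMm : ((M ^ m).map (algebraMap ℝ ℂ)) = (↑(u ^ m) : Matrix (Fin d) (Fin d) ℂ) := by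
    rw [Units.val_pow_eq_pow_val, hu, hMc, ← RingHom.mapMatrix_apply, ← RingHom.mapMatrix_apply,
      map_pow]
  have happ : Matrix.toEuclideanCLM (𝕜 := ℂ) (↑(u ^ m))
      ((WithLp.equiv 2 (Fin d → ℂ)).symm fun i => (x i : ℂ))
      = (WithLp.equiv 2 (Fin d → ℂ)).symm fun i => (((A ^ m) x) i : ℂ) := by
    rw [← hMm, ← hpow]
    exact hbridge (A ^ m) x
  have hTm : (T ^ m) ((WithLp.equiv 2 (Fin d → ℂ)).symm fun i => (((A ^ m) x) i : ℂ))
      = (WithLp.equiv 2 (Fin d → ℂ)).symm fun i => (x i : ℂ) := by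
    rw [← happ]
    have h1 : T ^ m = Matrix.toEuclideanCLM (𝕜 := ℂ) ((↑u⁻¹ : Matrix (Fin d) (Fin d) ℂ) ^ m) :=
      (map_pow _ _ _).symm
    rw [h1, ← ContinuousLinearMap.mul_apply, ← map_mul]
    have h2 : ((↑u⁻¹ : Matrix (Fin d) (Fin d) ℂ)) ^ m * ((↑(u ^ m) : Matrix (Fin d) (Fin d) ℂ)) = 1 := by
      rw [← Units.val_pow_eq_pow_val, ← Units.val_mul, inv_pow, inv_mul_cancel, Units.val_one]
    rw [h2, map_one, ContinuousLinearMap.one_apply]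
  have hnorm1 : ‖x‖ ≤ ‖T ^ m‖ * ‖(A ^ m) x‖ := by
    calc ‖x‖ = ‖(T ^ m) ((WithLp.equiv 2 (Fin d → ℂ)).symm fun i => (((A ^ m) x) i : ℂ))‖ := by
          rw [hTm, hnormι]
    _ ≤ ‖T ^ m‖ * ‖(WithLp.equiv 2 (Fin d → ℂ)).symm fun i => (((A ^ m) x) i : ℂ)‖ :=
          (T ^ m).le_opNorm _
    _ = ‖T ^ m‖ * ‖(A ^ m) x‖ := by rw [hnormι]
  have hnorm2 : ‖T ^ m‖ ≤ ‖T ^ n₀‖ ^ k := by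
    rw [hm, pow_mul]
    exact norm_pow_le' _ hk1
  calc ‖x‖ ≤ ‖T ^ m‖ * ‖(A ^ m) x‖ := hnorm1
  _ ≤ ‖T ^ n₀‖ ^ k * ‖(A ^ m) x‖ := mul_le_mul_of_nonneg_right hnorm2 (norm_nonneg _)
  _ < (ρ / r) * r := mul_lt_mul'' hk hx (by positivity) (norm_nonneg _)
  _ = ρ := div_mul_cancel₀ ρ hr.ne'

end Aux

theorem stmt_4 {d : ℕ} (hd : 1 ≤ d)
    (A : EuclideanSpace ℝ (Fin d) →ₗ[ℝ] EuclideanSpace ℝ (Fin d)) (hA : IsExpansive A)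
    (E K : Set (EuclideanSpace ℝ (Fin d))) (hE : MeasurableSet E) (hK : MeasurableSet K)
    (r₁ r₂ : ℝ) (hr₁ : 0 < r₁) (hr₁₂ : r₁ < r₂)
    (hK₁ : ball (0 : EuclideanSpace ℝ (Fin d)) r₁ ⊆ K)
    (hK₂ : K ⊆ ball (0 : EuclideanSpace ℝ (Fin d)) r₂) :
    (HasADensityZero A E ↔
      Tendsto (fun j : ℕ =>
          volume (E ∩ ⇑(A ^ j) ⁻¹' K) / volume (⇑(A ^ j) ⁻¹' K)) atTop (𝓝 1)) ∧
    (HasADensityZero A E ↔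
      Tendsto (fun j : ℕ =>
          volume (Eᶜ ∩ ⇑(A ^ j) ⁻¹' K) / volume (⇑(A ^ j) ⁻¹' K)) atTop (𝓝 0)) := by
  obtain ⟨hdet, hcontract⟩ := aux_expansive_contract hd A hA
  have hdetpow : ∀ j : ℕ, LinearMap.det (A ^ j) ≠ 0 := by
    intro j
    rw [map_pow]
    exact pow_ne_zero j hdet
  set w : ℕ → ℝ≥0∞ := fun j => ENNReal.ofReal |(LinearMap.det (A ^ j))⁻¹| with hw
  have hw0 : ∀ j, w j ≠ 0 := by
    intro j
    simp only [hw, ne_eq, ENNReal.ofReal_eq_zero, not_le]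
    exact abs_pos.mpr (inv_ne_zero (hdetpow j))
  have hwt : ∀ j, w j ≠ ⊤ := fun j => ENNReal.ofReal_ne_top
  have hvol : ∀ (j : ℕ) (S : Set (EuclideanSpace ℝ (Fin d))),
      volume (⇑(A ^ j) ⁻¹' S) = w j * volume S := fun j S =>
    Measure.addHaar_preimage_linearMap volume (hdetpow j) S
  have hwmul : ∀ j m : ℕ, w (j + m) = w m * w j := by
    intro j m
    have h1 : LinearMap.det (A ^ (j + m)) = LinearMap.det (A ^ m) * LinearMap.det (A ^ j) := by
      rw [add_comm, pow_add, map_mul]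
    simp only [hw, h1, mul_inv, abs_mul]
    rw [ENNReal.ofReal_mul (abs_nonneg _)]
  -- positivity/finiteness of volumes
  have hballpos : ∀ r : ℝ, 0 < r → volume (ball (0 : EuclideanSpace ℝ (Fin d)) r) ≠ 0 :=
    fun r hr => (measure_ball_pos volume 0 hr).ne'
  have hballfin : ∀ r : ℝ, volume (ball (0 : EuclideanSpace ℝ (Fin d)) r) ≠ ⊤ :=
    fun r => measure_ball_lt_top.ne
  have hK0 : volume K ≠ 0 :=
    fun h => hballpos r₁ hr₁ (le_antisymm (h ▸ measure_mono hK₁) zero_le)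
  have hKfin : volume K ≠ ⊤ := ((measure_mono hK₂).trans_lt measure_ball_lt_top).ne
  -- ratios sum to 1
  have hsum : ∀ (S : Set (EuclideanSpace ℝ (Fin d))), volume S ≠ 0 → volume S ≠ ⊤ → ∀ j : ℕ,
      volume (E ∩ ⇑(A ^ j) ⁻¹' S) / volume (⇑(A ^ j) ⁻¹' S)
        + volume (Eᶜ ∩ ⇑(A ^ j) ⁻¹' S) / volume (⇑(A ^ j) ⁻¹' S) = 1 := by
    intro S hS0 hSt j
    have h := measure_inter_add_diff (μ := volume) (⇑(A ^ j) ⁻¹' S) hE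
    have h2 : E ∩ ⇑(A ^ j) ⁻¹' S = ⇑(A ^ j) ⁻¹' S ∩ E := Set.inter_comm _ _
    have h3 : Eᶜ ∩ ⇑(A ^ j) ⁻¹' S = ⇑(A ^ j) ⁻¹' S \ E := by
      rw [Set.diff_eq, Set.inter_comm]
    rw [h2, h3, ENNReal.div_add_div_same, h]
    refine ENNReal.div_self ?_ ?_
    · rw [hvol]
      exact mul_ne_zero (hw0 j) hS0
    · rw [hvol]
      exact ENNReal.mul_ne_top (hwt j) hSt
  have hPiff : ∀ (S : Set (EuclideanSpace ℝ (Fin d))), volume S ≠ 0 → volume S ≠ ⊤ →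
      (Tendsto (fun j : ℕ => volume (E ∩ ⇑(A ^ j) ⁻¹' S) / volume (⇑(A ^ j) ⁻¹' S)) atTop (𝓝 1)
        ↔ Tendsto (fun j : ℕ =>
            volume (Eᶜ ∩ ⇑(A ^ j) ⁻¹' S) / volume (⇑(A ^ j) ⁻¹' S)) atTop (𝓝 0)) :=
    fun S h0 ht => aux_tendsto_iff (hsum S h0 ht)
  -- the key comparison step
  have key : ∀ (S T : Set (EuclideanSpace ℝ (Fin d))), volume S ≠ 0 → volume S ≠ ⊤ →
      volume T ≠ 0 → volume T ≠ ⊤ → ∀ m : ℕ, ⇑(A ^ m) ⁻¹' S ⊆ T →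
      Tendsto (fun j : ℕ => volume (Eᶜ ∩ ⇑(A ^ j) ⁻¹' T) / volume (⇑(A ^ j) ⁻¹' T)) atTop (𝓝 0) →
      Tendsto (fun j : ℕ =>
        volume (Eᶜ ∩ ⇑(A ^ j) ⁻¹' S) / volume (⇑(A ^ j) ⁻¹' S)) atTop (𝓝 0) := by
    intro S T hS0 hSt hT0 hTt m hsub hT
    rw [← tendsto_add_atTop_iff_nat m]
    set C : ℝ≥0∞ := volume T / (w m * volume S) with hC
    have hCt : C ≠ ⊤ := (ENNReal.div_lt_top hTt (mul_ne_zero (hw0 m) hS0)).ne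
    have hbound : ∀ j : ℕ,
        volume (Eᶜ ∩ ⇑(A ^ (j + m)) ⁻¹' S) / volume (⇑(A ^ (j + m)) ⁻¹' S)
          ≤ C * (volume (Eᶜ ∩ ⇑(A ^ j) ⁻¹' T) / volume (⇑(A ^ j) ⁻¹' T)) := by
      intro j
      have hpre : ⇑(A ^ (j + m)) ⁻¹' S = ⇑(A ^ j) ⁻¹' (⇑(A ^ m) ⁻¹' S) := by
        rw [add_comm, pow_add]
        rfl
      have h1 : volume (Eᶜ ∩ ⇑(A ^ (j + m)) ⁻¹' S) ≤ volume (Eᶜ ∩ ⇑(A ^ j) ⁻¹' T) := by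
        refine measure_mono (Set.inter_subset_inter_right _ ?_)
        rw [hpre]
        exact Set.preimage_mono hsub
      have hyT0 : volume (⇑(A ^ j) ⁻¹' T) ≠ 0 := by
        rw [hvol]; exact mul_ne_zero (hw0 j) hT0
      have hyTt : volume (⇑(A ^ j) ⁻¹' T) ≠ ⊤ := by
        rw [hvol]; exact ENNReal.mul_ne_top (hwt j) hTt
      calc volume (Eᶜ ∩ ⇑(A ^ (j + m)) ⁻¹' S) / volume (⇑(A ^ (j + m)) ⁻¹' S)
          ≤ volume (⇑(A ^ j) ⁻¹' T) / volume (⇑(A ^ (j + m)) ⁻¹' S)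
            * (volume (Eᶜ ∩ ⇑(A ^ j) ⁻¹' T) / volume (⇑(A ^ j) ⁻¹' T)) :=
            aux_div_le h1 hyT0 hyTt
      _ = C * (volume (Eᶜ ∩ ⇑(A ^ j) ⁻¹' T) / volume (⇑(A ^ j) ⁻¹' T)) := by
            congr 1
            rw [hvol, hvol, hwmul j m, hC]
            rw [mul_comm (w j) (volume T), mul_comm (w m) (w j), mul_assoc,
              mul_comm (w j) (w m * volume S)]
            exact ENNReal.mul_div_mul_right _ _ (hw0 j) (hwt j)
    have hlim : Tendsto (fun j : ℕ =>
        C * (volume (Eᶜ ∩ ⇑(A ^ j) ⁻¹' T) / volume (⇑(A ^ j) ⁻¹' T))) atTop (𝓝 0) := by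
      have := ENNReal.Tendsto.const_mul (a := C) hT (Or.inr hCt)
      simpa using this
    exact tendsto_of_tendsto_of_tendsto_of_le_of_le tendsto_const_nhds hlim
      (fun j => zero_le) hbound
  -- transfer between K and balls
  have hKto : Tendsto (fun j : ℕ =>
      volume (Eᶜ ∩ ⇑(A ^ j) ⁻¹' K) / volume (⇑(A ^ j) ⁻¹' K)) atTop (𝓝 0) ↔
      HasADensityZero A E := by
    constructor
    · intro hK0'
      intro r hr
      rw [hPiff (ball 0 r) (hballpos r hr) (hballfin r)]
      obtain ⟨m, hm⟩ := hcontract r r₁ hr hr₁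
      refine key (ball 0 r) K (hballpos r hr) (hballfin r) hK0 hKfin m ?_ hK0'
      intro x hx
      apply hK₁
      rw [mem_ball_zero_iff]
      exact hm x (by rwa [← mem_ball_zero_iff])
    · intro hDen
      have h0 := (hPiff (ball 0 r₂) (hballpos r₂ (hr₁.trans hr₁₂)) (hballfin r₂)).mp
        (hDen r₂ (hr₁.trans hr₁₂))
      refine key K (ball 0 r₂) hK0 hKfin (hballpos r₂ (hr₁.trans hr₁₂)) (hballfin r₂) 0 ?_ h0
      intro x hx
      apply hK₂
      simpa using hx
  exact ⟨hKto.symm.trans (hPiff K hK0 hKfin).symm, hKto.symm⟩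
end
end

section
/- Let A₁, A₂ : ℝ^d → ℝ^d be expansive linear maps and W ⊆ ℝ^d a subspace such that both W and W⊥ are invariant under both A₁ and A₂. If 𝓔_{A₁} = 𝓔_{A₂}, then 𝓔_{A₁|_W} = 𝓔_{A₂|_W}, where the families on W are defined with respect to Lebesgue measure on W. -/
open MeasureTheory Filter Metric Topology

noncomputable section

open scoped ENNReal NNReal

/-- A linear endomorphism of a finite-dimensional real vector space is expansive if every
complex root of its characteristic polynomial has absolute value greater than 1. -/
def IsExpansiveG {W : Type*} [AddCommGroup W] [Module ℝ W] [Module.Finite ℝ W]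
    (A : W →ₗ[ℝ] W) : Prop :=
  ∀ z : ℂ, (Polynomial.map (algebraMap ℝ ℂ) (LinearMap.charpoly A)).IsRoot z →
    1 < ‖z‖

/-- The origin is a point of `A`-density for `E` in a finite-dimensional real inner product
space (with its canonical Lebesgue measure): for every `r > 0`,
`|E ∩ A⁻ʲB_r| / |A⁻ʲB_r| → 1` as `j → ∞`. -/
def HasADensityZeroG {W : Type*} [NormedAddCommGroup W] [InnerProductSpace ℝ W]
    [FiniteDimensional ℝ W] [MeasurableSpace W] [BorelSpace W]
    (A : W →ₗ[ℝ] W) (E : Set W) : Prop :=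
  ∀ r : ℝ, 0 < r →
    Tendsto (fun j : ℕ =>
        volume (E ∩ ⇑(A ^ j) ⁻¹' ball (0 : W) r) / volume (⇑(A ^ j) ⁻¹' ball (0 : W) r))
      atTop (𝓝 1)

/-- The family `𝓔_A` of measurable sets having the origin as a point of `A`-density. -/
def densityFamilyG {W : Type*} [NormedAddCommGroup W] [InnerProductSpace ℝ W]
    [FiniteDimensional ℝ W] [MeasurableSpace W] [BorelSpace W]
    (A : W →ₗ[ℝ] W) : Set (Set W) :=
  {E | MeasurableSet E ∧ HasADensityZeroG A E}



section aux
variable {V : Type*} [NormedAddCommGroup V] [InnerProductSpace ℝ V] [FiniteDimensional ℝ V]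

lemma det_ne_zero_of_expansive_s6 (A : V →ₗ[ℝ] V) (hA : IsExpansiveG A) :
    LinearMap.det A ≠ 0 := by
  intro h
  have h0 : (LinearMap.charpoly A).coeff 0 = 0 := by
    have h1 := LinearMap.det_eq_sign_charpoly_coeff A
    rw [h] at h1
    rcases mul_eq_zero.mp h1.symm with h2 | h2
    · exact absurd h2 (pow_ne_zero _ (by norm_num))
    · exact h2
  have hroot : (Polynomial.map (algebraMap ℝ ℂ) (LinearMap.charpoly A)).IsRoot 0 := by
    rw [Polynomial.IsRoot, ← Polynomial.coeff_zero_eq_eval_zero, Polynomial.coeff_map, h0]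
    simp
  have := hA 0 hroot
  rw [norm_zero] at this; linarith

lemma injective_of_det_ne_zero (A : V →ₗ[ℝ] V) (h : LinearMap.det A ≠ 0) :
    Function.Injective A := by
  rw [← LinearMap.ker_eq_bot]
  by_contra hk
  have hlt : ⊥ < LinearMap.ker A := bot_lt_iff_ne_bot.mpr hk
  exact h (((LinearMap.hasEigenvalue_zero_tfae A).out 4 3).mp hlt)

lemma det_restrict_ne_zero (A : V →ₗ[ℝ] V) (hinj : Function.Injective A)
    {p : Submodule ℝ V} (hp : ∀ x ∈ p, A x ∈ p) :
    LinearMap.det (A.restrict hp) ≠ 0 := by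
  have hker : LinearMap.ker (A.restrict hp) = ⊥ := by
    rw [LinearMap.ker_eq_bot]
    intro x y hxy
    have : A (x : V) = A (y : V) := by
      have hx := congrArg (Subtype.val) hxy
      simpa [LinearMap.restrict_apply] using hx
    exact Subtype.ext (hinj this)
  exact ((LinearMap.isUnit_det _ ((LinearMap.isUnit_iff_ker_eq_bot _).mpr hker)).ne_zero)

end aux


lemma tendsto_one_sub_ennreal {x : ℕ → ℝ≥0∞} {l : ℝ≥0∞} (h : Tendsto x atTop (𝓝 l)) :
    Tendsto (fun j => 1 - x j) atTop (𝓝 (1 - l)) :=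
  ENNReal.Tendsto.sub tendsto_const_nhds h (Or.inl (by simp))

lemma ratio_iff {X : Type*} [MeasurableSpace X] (μ : Measure X) {E : Set X}
    (hE : MeasurableSet E) (S : ℕ → Set X) (h0 : ∀ j, μ (S j) ≠ 0)
    (ht : ∀ j, μ (S j) ≠ ∞) :
    Tendsto (fun j => μ (E ∩ S j) / μ (S j)) atTop (𝓝 1) ↔
      Tendsto (fun j => μ (S j \ E) / μ (S j)) atTop (𝓝 0) := by
  have hsum : ∀ j, μ (E ∩ S j) / μ (S j) + μ (S j \ E) / μ (S j) = 1 := by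
    intro j
    rw [ENNReal.div_add_div_same, Set.inter_comm, measure_inter_add_diff _ hE,
      ENNReal.div_self (h0 j) (ht j)]
  have hle1 : ∀ j, μ (E ∩ S j) / μ (S j) ≤ 1 := fun j =>
    le_trans (le_add_self.trans_eq (add_comm _ _)) (hsum j).le
  have hle2 : ∀ j, μ (S j \ E) / μ (S j) ≤ 1 := fun j =>
    le_trans le_add_self (hsum j).le
  constructor
  · intro hx
    have := tendsto_one_sub_ennreal hx
    simp only [tsub_self] at this
    refine this.congr fun j => ?_
    rw [← hsum j, ENNReal.add_sub_cancel_left]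
    exact ((hle1 j).trans_lt (by norm_num)).ne
  · intro hy
    have := tendsto_one_sub_ennreal hy
    simp only [tsub_zero] at this
    refine this.congr fun j => ?_
    rw [← hsum j, ENNReal.add_sub_cancel_right]
    exact ((hle2 j).trans_lt (by norm_num)).ne

lemma tendsto_zero_squeeze {b g : ℕ → ℝ≥0∞} {C : ℝ≥0∞} (hC : C ≠ ∞)
    (hg : Tendsto g atTop (𝓝 0)) (hb : ∀ j, b j ≤ g j * C) :
    Tendsto b atTop (𝓝 0) := by
  have : Tendsto (fun j => g j * C) atTop (𝓝 (0 * C)) :=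
    ENNReal.Tendsto.mul_const hg (Or.inr hC)
  rw [zero_mul] at this
  exact tendsto_of_tendsto_of_tendsto_of_le_of_le tendsto_const_nhds this
    (fun j => zero_le) hb


section struct
variable {V : Type*} [NormedAddCommGroup V] [InnerProductSpace ℝ V] [FiniteDimensional ℝ V]
  [MeasurableSpace V] [BorelSpace V]
  (W : Submodule ℝ V) [MeasurableSpace ↥W] [BorelSpace ↥W]

lemma measurableSet_sum_image {S₁ : Set ↥W} {S₂ : Set ↥Wᗮ}
    (hS₁ : MeasurableSet S₁) (hS₂ : MeasurableSet S₂) :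
    MeasurableSet ((fun p : ↥W × ↥Wᗮ => ((p.1 : V) + (p.2 : V))) '' (S₁ ×ˢ S₂)) := by
  have hc : IsCompl W Wᗮ := Submodule.isCompl_orthogonal_of_hasOrthogonalProjection
  set Φ := (W.prodEquivOfIsCompl Wᗮ hc).toContinuousLinearEquiv with hΦ
  have hfun : ⇑Φ = (fun p : ↥W × ↥Wᗮ => ((p.1 : V) + (p.2 : V))) := by
    funext p; simp [hΦ]
  rw [← hfun, Φ.image_eq_preimage_symm]
  exact (Φ.symm.continuous.measurable) (hS₁.prod hS₂)

lemma exists_const_sum_image :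
    ∃ c : ℝ≥0∞, c ≠ 0 ∧ c ≠ ⊤ ∧ ∀ (S₁ : Set ↥W) (S₂ : Set ↥Wᗮ),
      MeasurableSet S₁ → MeasurableSet S₂ →
      volume ((fun p : ↥W × ↥Wᗮ => ((p.1 : V) + (p.2 : V))) '' (S₁ ×ˢ S₂))
        = c * (volume S₁ * volume S₂) := by
  have hc : IsCompl W Wᗮ := Submodule.isCompl_orthogonal_of_hasOrthogonalProjection
  set e := W.prodEquivOfIsCompl Wᗮ hc with he
  set Φ := e.toContinuousLinearEquiv with hΦ
  have hfun : ⇑Φ = (fun p : ↥W × ↥Wᗮ => ((p.1 : V) + (p.2 : V))) := by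
    funext p
    simp [hΦ, he]
  set π := (volume : Measure ↥W).prod (volume : Measure ↥Wᗮ) with hπ
  set μ' := Measure.map Φ π with hμ'
  haveI : Measure.IsAddHaarMeasure μ' := Φ.isAddHaarMeasure_map π
  have huniq : μ' = Measure.addHaarScalarFactor μ' (volume : Measure V) • volume :=
    Measure.isAddLeftInvariant_eq_smul μ' volume
  set c0 := Measure.addHaarScalarFactor μ' (volume : Measure V) with hc0
  have hc0pos : 0 < c0 := Measure.addHaarScalarFactor_pos_of_isAddHaarMeasure _ _
  refine ⟨((c0 : ℝ≥0∞))⁻¹, by simp, by simp [hc0pos.ne'], ?_⟩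
  intro S₁ S₂ hS₁ hS₂
  rw [← hfun]
  have hm : MeasurableSet (⇑Φ '' (S₁ ×ˢ S₂)) := by
    rw [Φ.image_eq_preimage_symm]
    exact (Φ.symm.continuous.measurable) (hS₁.prod hS₂)
  have h1 : μ' (⇑Φ '' (S₁ ×ˢ S₂)) = π (S₁ ×ˢ S₂) := by
    rw [hμ', Measure.map_apply Φ.continuous.measurable hm,
      Set.preimage_image_eq _ Φ.injective]
  have h2 : π (S₁ ×ˢ S₂) = volume S₁ * volume S₂ := Measure.prod_prod _ _
  have h3 : μ' (⇑Φ '' (S₁ ×ˢ S₂)) = (c0 : ℝ≥0∞) * volume (⇑Φ '' (S₁ ×ˢ S₂)) := by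
    rw [huniq]; simp
  rw [← h2, ← h1, h3, ← mul_assoc, ENNReal.inv_mul_cancel (by exact_mod_cast hc0pos.ne')
    (by simp), one_mul]
lemma transfer_density (A : V →ₗ[ℝ] V) (hdet : LinearMap.det A ≠ 0)
    (hW : ∀ x ∈ W, A x ∈ W) (hWp : ∀ x ∈ Wᗮ, A x ∈ Wᗮ)
    (E : Set ↥W) (hE : MeasurableSet E) :
    HasADensityZeroG (A.restrict hW) E ↔
      HasADensityZeroG A
        ((fun p : ↥W × ↥Wᗮ => ((p.1 : V) + (p.2 : V))) '' (E ×ˢ Set.univ)) := by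
  classical
  obtain ⟨c, hc0, hct, hcS⟩ := exists_const_sum_image W
  have hcpl : IsCompl W Wᗮ := Submodule.isCompl_orthogonal_of_hasOrthogonalProjection
  set σ : ↥W × ↥Wᗮ → V := fun p => ((p.1 : V) + (p.2 : V)) with hσdef
  have hσe : ⇑(W.prodEquivOfIsCompl Wᗮ hcpl) = σ := by funext p; simp [hσdef]
  have hσinj : Function.Injective σ := hσe ▸ (W.prodEquivOfIsCompl Wᗮ hcpl).injective
  have hσsurj : Function.Surjective σ := hσe ▸ (W.prodEquivOfIsCompl Wᗮ hcpl).surjective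
  set AW := A.restrict hW with hAW
  set AK := A.restrict hWp with hAK
  have hinj : Function.Injective A := by
    rw [← LinearMap.ker_eq_bot]
    by_contra hk
    exact hdet (((LinearMap.hasEigenvalue_zero_tfae A).out 4 3).mp (bot_lt_iff_ne_bot.mpr hk))
  have hdW : LinearMap.det AW ≠ 0 := det_restrict_ne_zero A hinj hW
  have hdK : LinearMap.det AK ≠ 0 := det_restrict_ne_zero A hinj hWp
  have hdWj : ∀ j : ℕ, LinearMap.det (AW ^ j) ≠ 0 := fun j => by
    rw [map_pow]; exact pow_ne_zero _ hdW
  have hdKj : ∀ j : ℕ, LinearMap.det (AK ^ j) ≠ 0 := fun j => by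
    rw [map_pow]; exact pow_ne_zero _ hdK
  -- commutation
  have hcoeW : ∀ (j : ℕ) (x : ↥W), (((AW ^ j) x : ↥W) : V) = (A ^ j) (x : V) := by
    intro j x
    rw [hAW, Module.End.pow_restrict]
    rfl
  have hcoeK : ∀ (j : ℕ) (x : ↥Wᗮ), (((AK ^ j) x : ↥Wᗮ) : V) = (A ^ j) (x : V) := by
    intro j x
    rw [hAK, Module.End.pow_restrict]
    rfl
  have hcomm : ∀ (j : ℕ) (p : ↥W × ↥Wᗮ),
      σ ((AW ^ j) p.1, (AK ^ j) p.2) = (A ^ j) (σ p) := by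
    intro j p
    simp only [hσdef, hcoeW, hcoeK, map_add]
  -- block preimage
  have hblock : ∀ (j : ℕ) (T₁ : Set ↥W) (T₂ : Set ↥Wᗮ),
      ⇑(A ^ j) ⁻¹' (σ '' (T₁ ×ˢ T₂)) =
        σ '' ((⇑(AW ^ j) ⁻¹' T₁) ×ˢ (⇑(AK ^ j) ⁻¹' T₂)) := by
    intro j T₁ T₂
    ext x
    constructor
    · rintro hx
      obtain ⟨p, hp, hpx⟩ := hx
      obtain ⟨q, rfl⟩ := hσsurj x
      have h1 : σ ((AW ^ j) q.1, (AK ^ j) q.2) = σ p := by rw [hcomm]; exact hpx.symm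
      have h2 := hσinj h1
      refine ⟨q, ⟨?_, ?_⟩, rfl⟩
      · show (AW ^ j) q.1 ∈ T₁
        rw [show (AW ^ j) q.1 = p.1 from congrArg Prod.fst h2]
        exact hp.1
      · show (AK ^ j) q.2 ∈ T₂
        rw [show (AK ^ j) q.2 = p.2 from congrArg Prod.snd h2]
        exact hp.2
    · rintro ⟨p, ⟨h1, h2⟩, rfl⟩
      exact ⟨((AW ^ j) p.1, (AK ^ j) p.2), ⟨h1, h2⟩, hcomm j p⟩
  -- ball inclusions
  have hball1 : ∀ r : ℝ, ball (0 : V) r ⊆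
      σ '' ((ball (0 : ↥W) r) ×ˢ (ball (0 : ↥Wᗮ) r)) := by
    intro r x hx
    obtain ⟨p, rfl⟩ := hσsurj x
    have horth : inner ℝ (p.1 : V) (p.2 : V) = (0 : ℝ) :=
      Submodule.inner_right_of_mem_orthogonal p.1.2 p.2.2
    have hsq : ‖σ p‖ ^ 2 = ‖(p.1 : V)‖ ^ 2 + ‖(p.2 : V)‖ ^ 2 := by
      rw [hσdef]
      simp only []
      rw [norm_add_sq_real, horth]
      ring
    have hxlt : ‖σ p‖ < r := by simpa [dist_eq_norm] using hx
    refine ⟨p, ⟨?_, ?_⟩, rfl⟩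
    · rw [mem_ball, dist_zero_right, Submodule.coe_norm]
      nlinarith [norm_nonneg (p.1 : V), norm_nonneg (p.2 : V), norm_nonneg (σ p)]
    · rw [mem_ball, dist_zero_right, Submodule.coe_norm]
      nlinarith [norm_nonneg (p.1 : V), norm_nonneg (p.2 : V), norm_nonneg (σ p)]
  have hball2 : ∀ s : ℝ, σ '' ((ball (0 : ↥W) s) ×ˢ (ball (0 : ↥Wᗮ) s))
      ⊆ ball (0 : V) (2 * s) := by
    rintro s x ⟨p, ⟨h1, h2⟩, rfl⟩
    rw [mem_ball, dist_zero_right] at h1 h2 ⊢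
    rw [Submodule.coe_norm] at h1 h2
    calc ‖σ p‖ ≤ ‖(p.1 : V)‖ + ‖(p.2 : V)‖ := norm_add_le _ _
      _ < 2 * s := by linarith

  -- measures
  set BW : ℝ → ℝ≥0∞ := fun r => volume (ball (0 : ↥W) r) with hBWdef
  set BK : ℝ → ℝ≥0∞ := fun r => volume (ball (0 : ↥Wᗮ) r) with hBKdef
  have hBWpos : ∀ r : ℝ, 0 < r → BW r ≠ 0 := fun r hr => (measure_ball_pos _ _ hr).ne'
  have hBWtop : ∀ r : ℝ, BW r ≠ ∞ := fun r => measure_ball_lt_top.ne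
  have hBKpos : ∀ r : ℝ, 0 < r → BK r ≠ 0 := fun r hr => (measure_ball_pos _ _ hr).ne'
  have hBKtop : ∀ r : ℝ, BK r ≠ ∞ := fun r => measure_ball_lt_top.ne
  set dW : ℕ → ℝ≥0∞ := fun j => ENNReal.ofReal |(LinearMap.det (AW ^ j))⁻¹| with hdWdef
  set dK : ℕ → ℝ≥0∞ := fun j => ENNReal.ofReal |(LinearMap.det (AK ^ j))⁻¹| with hdKdef
  have hdWpos : ∀ j, dW j ≠ 0 := fun j =>
    (ENNReal.ofReal_pos.mpr (abs_pos.mpr (inv_ne_zero (hdWj j)))).ne'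
  have hdWtop : ∀ j, dW j ≠ ∞ := fun j => ENNReal.ofReal_ne_top
  have hdKpos : ∀ j, dK j ≠ 0 := fun j =>
    (ENNReal.ofReal_pos.mpr (abs_pos.mpr (inv_ne_zero (hdKj j)))).ne'
  have hdKtop : ∀ j, dK j ≠ ∞ := fun j => ENNReal.ofReal_ne_top
  have hvolW : ∀ (j : ℕ) (s : Set ↥W),
      volume (⇑(AW ^ j) ⁻¹' s) = dW j * volume s := fun j s =>
    Measure.addHaar_preimage_linearMap volume (hdWj j) s
  have hvolK : ∀ (j : ℕ) (s : Set ↥Wᗮ),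
      volume (⇑(AK ^ j) ⁻¹' s) = dK j * volume s := fun j s =>
    Measure.addHaar_preimage_linearMap volume (hdKj j) s
  have hSWmeas : ∀ (j : ℕ) (r : ℝ), MeasurableSet (⇑(AW ^ j) ⁻¹' ball (0 : ↥W) r) :=
    fun j r => (AW ^ j).continuous_of_finiteDimensional.measurable measurableSet_ball
  have hSKmeas : ∀ (j : ℕ) (r : ℝ), MeasurableSet (⇑(AK ^ j) ⁻¹' ball (0 : ↥Wᗮ) r) :=
    fun j r => (AK ^ j).continuous_of_finiteDimensional.measurable measurableSet_ball
  have hSAup : ∀ (j : ℕ) (r : ℝ), volume (⇑(A ^ j) ⁻¹' ball (0 : V) r)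
      ≤ c * ((dW j * BW r) * (dK j * BK r)) := by
    intro j r
    calc volume (⇑(A ^ j) ⁻¹' ball (0 : V) r)
        ≤ volume (⇑(A ^ j) ⁻¹' (σ '' ((ball (0 : ↥W) r) ×ˢ (ball (0 : ↥Wᗮ) r)))) :=
          measure_mono (Set.preimage_mono (hball1 r))
      _ = volume (σ '' ((⇑(AW ^ j) ⁻¹' ball (0 : ↥W) r) ×ˢ (⇑(AK ^ j) ⁻¹' ball (0 : ↥Wᗮ) r))) := by
          rw [hblock]
      _ = c * (volume (⇑(AW ^ j) ⁻¹' ball (0 : ↥W) r) * volume (⇑(AK ^ j) ⁻¹' ball (0 : ↥Wᗮ) r)) :=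
          hcS _ _ (hSWmeas j r) (hSKmeas j r)
      _ = c * ((dW j * BW r) * (dK j * BK r)) := by rw [hvolW, hvolK]
  have hSAlow : ∀ (j : ℕ) (r s : ℝ), 2 * s ≤ r →
      c * ((dW j * BW s) * (dK j * BK s)) ≤ volume (⇑(A ^ j) ⁻¹' ball (0 : V) r) := by
    intro j r s hs
    calc c * ((dW j * BW s) * (dK j * BK s))
        = c * (volume (⇑(AW ^ j) ⁻¹' ball (0 : ↥W) s) * volume (⇑(AK ^ j) ⁻¹' ball (0 : ↥Wᗮ) s)) := by
          rw [hvolW, hvolK]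
      _ = volume (σ '' ((⇑(AW ^ j) ⁻¹' ball (0 : ↥W) s) ×ˢ (⇑(AK ^ j) ⁻¹' ball (0 : ↥Wᗮ) s))) :=
          (hcS _ _ (hSWmeas j s) (hSKmeas j s)).symm
      _ = volume (⇑(A ^ j) ⁻¹' (σ '' ((ball (0 : ↥W) s) ×ˢ (ball (0 : ↥Wᗮ) s)))) := by
          rw [hblock]
      _ ≤ volume (⇑(A ^ j) ⁻¹' ball (0 : V) (2 * s)) :=
          measure_mono (Set.preimage_mono (hball2 s))
      _ ≤ volume (⇑(A ^ j) ⁻¹' ball (0 : V) r) :=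
          measure_mono (Set.preimage_mono (ball_subset_ball hs))
  have hSApos : ∀ (j : ℕ) (r : ℝ), 0 < r → volume (⇑(A ^ j) ⁻¹' ball (0 : V) r) ≠ 0 := by
    intro j r hr
    refine fun h0 => ?_
    have := hSAlow j r (r / 2) (by linarith)
    rw [h0, le_zero_iff] at this
    have hne : c * ((dW j * BW (r / 2)) * (dK j * BK (r / 2))) ≠ 0 :=
      mul_ne_zero hc0 (mul_ne_zero (mul_ne_zero (hdWpos j) (hBWpos _ (by linarith)))
        (mul_ne_zero (hdKpos j) (hBKpos _ (by linarith))))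
    exact hne this
  have hSAtop : ∀ (j : ℕ) (r : ℝ), volume (⇑(A ^ j) ⁻¹' ball (0 : V) r) ≠ ∞ := by
    intro j r
    refine ((hSAup j r).trans_lt ?_).ne
    exact ENNReal.mul_lt_top hct.lt_top (ENNReal.mul_lt_top
      (ENNReal.mul_lt_top (hdWtop j).lt_top (hBWtop r).lt_top)
      (ENNReal.mul_lt_top (hdKtop j).lt_top (hBKtop r).lt_top))
  have hSWne0 : ∀ (j : ℕ) (r : ℝ), 0 < r → volume (⇑(AW ^ j) ⁻¹' ball (0 : ↥W) r) ≠ 0 := by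
    intro j r hr
    rw [hvolW]
    exact mul_ne_zero (hdWpos j) (hBWpos r hr)
  have hSWtop : ∀ (j : ℕ) (r : ℝ), volume (⇑(AW ^ j) ⁻¹' ball (0 : ↥W) r) ≠ ∞ := by
    intro j r
    rw [hvolW]
    exact (ENNReal.mul_lt_top (hdWtop j).lt_top (hBWtop r).lt_top).ne

  constructor
  · -- W-density implies ambient density of the cylinder
    intro hEd r hr
    have hFmeas : MeasurableSet (σ '' (E ×ˢ Set.univ)) :=
      measurableSet_sum_image W hE MeasurableSet.univ
    refine (ratio_iff volume hFmeas (fun j => ⇑(A ^ j) ⁻¹' ball (0 : V) r)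
      (fun j => hSApos j r hr) (fun j => hSAtop j r)).mpr ?_
    have hεlim : Tendsto (fun j => volume ((⇑(AW ^ j) ⁻¹' ball (0 : ↥W) r) \ E)
        / volume (⇑(AW ^ j) ⁻¹' ball (0 : ↥W) r)) atTop (𝓝 0) :=
      (ratio_iff volume hE (fun j => ⇑(AW ^ j) ⁻¹' ball (0 : ↥W) r)
        (fun j => hSWne0 j r hr) (fun j => hSWtop j r)).mp (hEd r hr)
    have hCtop : (BW r / BW (r / 2)) * (BK r / BK (r / 2)) ≠ ∞ :=
      (ENNReal.mul_lt_top
        (ENNReal.div_lt_top (hBWtop r) (hBWpos _ (by linarith)))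
        (ENNReal.div_lt_top (hBKtop r) (hBKpos _ (by linarith)))).ne
    refine tendsto_zero_squeeze hCtop hεlim ?_
    intro j
    set SW := ⇑(AW ^ j) ⁻¹' ball (0 : ↥W) r with hSWdef
    set SK := ⇑(AK ^ j) ⁻¹' ball (0 : ↥Wᗮ) r with hSKdef
    have hvolSW : volume SW = dW j * BW r := by rw [hSWdef, hvolW]
    have hvolSK : volume SK = dK j * BK r := by rw [hSKdef, hvolK]
    have hnum : volume ((⇑(A ^ j) ⁻¹' ball (0 : V) r) \ (σ '' (E ×ˢ Set.univ)))
        ≤ c * (volume (SW \ E) * (dK j * BK r)) := by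
      have hsub : (⇑(A ^ j) ⁻¹' ball (0 : V) r) \ (σ '' (E ×ˢ Set.univ))
          ⊆ σ '' ((SW \ E) ×ˢ SK) := by
        rintro x ⟨hx1, hx2⟩
        have hx1' : x ∈ ⇑(A ^ j) ⁻¹' (σ '' ((ball (0 : ↥W) r) ×ˢ (ball (0 : ↥Wᗮ) r))) :=
          Set.preimage_mono (hball1 r) hx1
        rw [hblock] at hx1'
        obtain ⟨p, ⟨hp1, hp2⟩, rfl⟩ := hx1'
        exact ⟨p, ⟨⟨hp1, fun hpE => hx2 ⟨p, ⟨hpE, Set.mem_univ _⟩, rfl⟩⟩, hp2⟩, rfl⟩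
      calc volume ((⇑(A ^ j) ⁻¹' ball (0 : V) r) \ (σ '' (E ×ˢ Set.univ)))
          ≤ volume (σ '' ((SW \ E) ×ˢ SK)) := measure_mono hsub
        _ = c * (volume (SW \ E) * volume SK) :=
            hcS _ _ ((hSWmeas j r).diff hE) (hSKmeas j r)
        _ = c * (volume (SW \ E) * (dK j * BK r)) := by rw [hvolSK]
    have hden := hSAlow j r (r / 2) (by linarith)
    have hD0 : c * ((dW j * BW (r / 2)) * (dK j * BK (r / 2))) ≠ 0 :=
      mul_ne_zero hc0 (mul_ne_zero (mul_ne_zero (hdWpos j) (hBWpos _ (by linarith)))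
        (mul_ne_zero (hdKpos j) (hBKpos _ (by linarith))))
    have hDtop : c * ((dW j * BW (r / 2)) * (dK j * BK (r / 2))) ≠ ∞ :=
      (ENNReal.mul_lt_top hct.lt_top (ENNReal.mul_lt_top
        (ENNReal.mul_lt_top (hdWtop j).lt_top (hBWtop _).lt_top)
        (ENNReal.mul_lt_top (hdKtop j).lt_top (hBKtop _).lt_top))).ne
    refine le_trans (ENNReal.div_le_div hnum hden) ?_
    rw [ENNReal.div_le_iff_le_mul (Or.inl hD0) (Or.inl hDtop)]
    set ε := volume (SW \ E) / volume SW with hεdef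
    have hx : volume (SW \ E) = ε * (dW j * BW r) := by
      rw [hεdef, ← hvolSW, ENNReal.div_mul_cancel (hvolSW ▸ (hSWne0 j r hr))
        (hvolSW ▸ (hSWtop j r))]
    rw [hx]
    set qW := BW r / BW (r / 2) with hqWdef
    set qK := BK r / BK (r / 2) with hqKdef
    have hBWr : BW r = qW * BW (r / 2) :=
      (ENNReal.div_mul_cancel (hBWpos _ (by linarith)) (hBWtop _)).symm
    have hBKr : BK r = qK * BK (r / 2) :=
      (ENNReal.div_mul_cancel (hBKpos _ (by linarith)) (hBKtop _)).symm
    refine le_of_eq ?_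
    rw [hBWr, hBKr]
    ring
  · -- ambient density of the cylinder implies W-density
    intro hFd r hr
    have hFmeas : MeasurableSet (σ '' (E ×ˢ Set.univ)) :=
      measurableSet_sum_image W hE MeasurableSet.univ
    refine (ratio_iff volume hE (fun j => ⇑(AW ^ j) ⁻¹' ball (0 : ↥W) r)
      (fun j => hSWne0 j r hr) (fun j => hSWtop j r)).mpr ?_
    have hεlim : Tendsto (fun j => volume ((⇑(A ^ j) ⁻¹' ball (0 : V) (2 * r))
        \ (σ '' (E ×ˢ Set.univ))) / volume (⇑(A ^ j) ⁻¹' ball (0 : V) (2 * r)))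
        atTop (𝓝 0) :=
      (ratio_iff volume hFmeas (fun j => ⇑(A ^ j) ⁻¹' ball (0 : V) (2 * r))
        (fun j => hSApos j (2 * r) (by linarith)) (fun j => hSAtop j (2 * r))).mp
        (hFd (2 * r) (by linarith))
    have hCtop : (BW (2 * r) / BW r) * (BK (2 * r) / BK r) ≠ ∞ :=
      (ENNReal.mul_lt_top
        (ENNReal.div_lt_top (hBWtop _) (hBWpos _ hr))
        (ENNReal.div_lt_top (hBKtop _) (hBKpos _ hr))).ne
    refine tendsto_zero_squeeze hCtop hεlim ?_
    intro j
    set SW := ⇑(AW ^ j) ⁻¹' ball (0 : ↥W) r with hSWdef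
    set SK := ⇑(AK ^ j) ⁻¹' ball (0 : ↥Wᗮ) r with hSKdef
    set SA := ⇑(A ^ j) ⁻¹' ball (0 : V) (2 * r) with hSAdef
    have hvolSW : volume SW = dW j * BW r := by rw [hSWdef, hvolW]
    have hvolSK : volume SK = dK j * BK r := by rw [hSKdef, hvolK]
    set ε := volume (SA \ (σ '' (E ×ˢ Set.univ))) / volume SA with hεdef
    -- key chain
    have hkey : c * (volume (SW \ E) * (dK j * BK r))
        ≤ ε * (c * ((dW j * BW (2 * r)) * (dK j * BK (2 * r)))) := by
      have hsub : σ '' ((SW \ E) ×ˢ SK) ⊆ SA \ (σ '' (E ×ˢ Set.univ)) := by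
        refine Set.subset_diff.mpr ⟨?_, ?_⟩
        · refine le_trans (Set.image_mono (Set.prod_mono Set.diff_subset le_rfl)) ?_
          rw [hSWdef, hSKdef, ← hblock]
          exact Set.preimage_mono (hball2 r)
        · rw [Set.disjoint_left]
          rintro a ⟨p, ⟨⟨_, hpne⟩, _⟩, rfl⟩ ⟨q, ⟨hqE, _⟩, hq⟩
          exact hpne (by rw [← hσinj hq]; exact hqE)
      have h1 : volume (σ '' ((SW \ E) ×ˢ SK)) = c * (volume (SW \ E) * (dK j * BK r)) := by
        rw [hcS _ _ ((hSWmeas j r).diff hE) (hSKmeas j r), hvolSK]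
      have h2 : volume (SA \ (σ '' (E ×ˢ Set.univ))) = ε * volume SA := by
        rw [hεdef, ENNReal.div_mul_cancel (hSApos j (2 * r) (by linarith))
          (hSAtop j (2 * r))]
      calc c * (volume (SW \ E) * (dK j * BK r))
          = volume (σ '' ((SW \ E) ×ˢ SK)) := h1.symm
        _ ≤ volume (SA \ (σ '' (E ×ˢ Set.univ))) := measure_mono hsub
        _ = ε * volume SA := h2
        _ ≤ ε * (c * ((dW j * BW (2 * r)) * (dK j * BK (2 * r)))) :=
            mul_le_mul_right (hSAup j (2 * r)) ε
    -- conclude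
    have hz0 : c * (dK j * BK r) ≠ 0 :=
      mul_ne_zero hc0 (mul_ne_zero (hdKpos j) (hBKpos _ hr))
    have hztop : c * (dK j * BK r) ≠ ∞ :=
      (ENNReal.mul_lt_top hct.lt_top
        (ENNReal.mul_lt_top (hdKtop j).lt_top (hBKtop _).lt_top)).ne
    rw [ENNReal.div_le_iff_le_mul (Or.inl (hSWne0 j r hr)) (Or.inl (hSWtop j r))]
    rw [← ENNReal.mul_le_mul_iff_left hz0 hztop]
    set qW := BW (2 * r) / BW r with hqWdef
    set qK := BK (2 * r) / BK r with hqKdef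
    have hBWr : BW (2 * r) = qW * BW r :=
      (ENNReal.div_mul_cancel (hBWpos _ hr) (hBWtop _)).symm
    have hBKr : BK (2 * r) = qK * BK r :=
      (ENNReal.div_mul_cancel (hBKpos _ hr) (hBKtop _)).symm
    calc volume (SW \ E) * (c * (dK j * BK r))
        = c * (volume (SW \ E) * (dK j * BK r)) := by ring
      _ ≤ ε * (c * ((dW j * BW (2 * r)) * (dK j * BK (2 * r)))) := hkey
      _ = ε * (qW * qK) * (dW j * BW r) * (c * (dK j * BK r)) := by
          rw [hBWr, hBKr]; ring
      _ = ε * (qW * qK) * volume SW * (c * (dK j * BK r)) := by rw [hvolSW]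


end struct

theorem stmt_6 {d : ℕ} (hd : 1 ≤ d)
    (A₁ A₂ : EuclideanSpace ℝ (Fin d) →ₗ[ℝ] EuclideanSpace ℝ (Fin d))
    (hA₁ : IsExpansiveG A₁) (hA₂ : IsExpansiveG A₂)
    (W : Submodule ℝ (EuclideanSpace ℝ (Fin d)))
    (hW₁ : ∀ x ∈ W, A₁ x ∈ W) (hW₁p : ∀ x ∈ Wᗮ, A₁ x ∈ Wᗮ)
    (hW₂ : ∀ x ∈ W, A₂ x ∈ W) (hW₂p : ∀ x ∈ Wᗮ, A₂ x ∈ Wᗮ)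
    [MeasurableSpace ↥W] [BorelSpace ↥W]
    (h : densityFamilyG A₁ = densityFamilyG A₂) :
    densityFamilyG (A₁.restrict hW₁) = densityFamilyG (A₂.restrict hW₂) := by
  have hd₁ : LinearMap.det A₁ ≠ 0 := det_ne_zero_of_expansive_s6 A₁ hA₁
  have hd₂ : LinearMap.det A₂ ≠ 0 := det_ne_zero_of_expansive_s6 A₂ hA₂
  ext E
  simp only [densityFamilyG, Set.mem_setOf_eq]
  constructor
  · rintro ⟨hEm, hEd⟩
    refine ⟨hEm, ?_⟩
    have hFm : MeasurableSet ((fun p : ↥W × ↥Wᗮ =>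
        ((p.1 : EuclideanSpace ℝ (Fin d)) + (p.2 : EuclideanSpace ℝ (Fin d)))) ''
        (E ×ˢ Set.univ)) := measurableSet_sum_image W hEm MeasurableSet.univ
    have h1 := (transfer_density W A₁ hd₁ hW₁ hW₁p E hEm).mp hEd
    have h2 : ((fun p : ↥W × ↥Wᗮ =>
        ((p.1 : EuclideanSpace ℝ (Fin d)) + (p.2 : EuclideanSpace ℝ (Fin d)))) ''
        (E ×ˢ Set.univ)) ∈ densityFamilyG A₂ := by
      rw [← h]; exact ⟨hFm, h1⟩
    exact (transfer_density W A₂ hd₂ hW₂ hW₂p E hEm).mpr h2.2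
  · rintro ⟨hEm, hEd⟩
    refine ⟨hEm, ?_⟩
    have hFm : MeasurableSet ((fun p : ↥W × ↥Wᗮ =>
        ((p.1 : EuclideanSpace ℝ (Fin d)) + (p.2 : EuclideanSpace ℝ (Fin d)))) ''
        (E ×ˢ Set.univ)) := measurableSet_sum_image W hEm MeasurableSet.univ
    have h1 := (transfer_density W A₂ hd₂ hW₂ hW₂p E hEm).mp hEd
    have h2 : ((fun p : ↥W × ↥Wᗮ =>
        ((p.1 : EuclideanSpace ℝ (Fin d)) + (p.2 : EuclideanSpace ℝ (Fin d)))) ''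
        (E ×ˢ Set.univ)) ∈ densityFamilyG A₁ := by
      rw [h]; exact ⟨hFm, h1⟩
    exact (transfer_density W A₁ hd₁ hW₁ hW₁p E hEm).mpr h2.2
end
end

section
/- Let A₁, A₂ : ℝ^d → ℝ^d be expansive linear maps that are simultaneously diagonalizable: there is a basis u₁, …, u_d of ℝ^d whose elements are eigenvectors of both A₁ and A₂, with A_μ u_i = λ_i^{(μ)} u_i for μ = 1, 2 and i = 1, …, d. If |λ_i^{(1)}| = |λ_i^{(2)}| for every i = 1, …, d, then 𝓔_{A₁} = 𝓔_{A₂}. -/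
open MeasureTheory Filter Metric Topology

noncomputable section

/-- The determinant of a map that is diagonal in some basis is the product of the diagonal
entries. -/
private lemma det_of_diag {d : ℕ}
    (A : EuclideanSpace ℝ (Fin d) →ₗ[ℝ] EuclideanSpace ℝ (Fin d))
    (u : Module.Basis (Fin d) ℝ (EuclideanSpace ℝ (Fin d))) (lam : Fin d → ℝ)
    (hu : ∀ i, A (u i) = lam i • u i) : LinearMap.det A = ∏ i, lam i := by
  rw [← LinearMap.det_toMatrix u]
  have h : LinearMap.toMatrix u u A = Matrix.diagonal lam := by
    ext i j
    rw [LinearMap.toMatrix_apply, hu, _root_.map_smul]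
    rcases eq_or_ne i j with rfl | hij
    · simp [Matrix.diagonal]
    · simp [Matrix.diagonal, Finsupp.single_apply, Ne.symm hij, hij]
  rw [h, Matrix.det_diagonal]

/-- A real eigenvalue of an expansive map is nonzero. -/
private lemma lam_ne_zero {d : ℕ}
    {A : EuclideanSpace ℝ (Fin d) →ₗ[ℝ] EuclideanSpace ℝ (Fin d)} (hA : IsExpansive A)
    (u : Module.Basis (Fin d) ℝ (EuclideanSpace ℝ (Fin d))) (lam : Fin d → ℝ)
    (hu : ∀ i, A (u i) = lam i • u i) (i : Fin d) : lam i ≠ 0 := by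
  have hroot : (LinearMap.charpoly A).IsRoot (lam i) := by
    have h1 : Module.End.HasEigenvalue (A : Module.End ℝ (EuclideanSpace ℝ (Fin d))) (lam i) :=
      Module.End.hasEigenvalue_of_hasEigenvector
        ⟨Module.End.mem_eigenspace_iff.2 (hu i), u.ne_zero i⟩
    have h2 := Module.End.hasEigenvalue_iff_isRoot.1 h1
    exact h2.dvd (LinearMap.minpoly_dvd_charpoly A)
  have hroot2 : ((LinearMap.charpoly A).map (algebraMap ℝ ℂ)).IsRoot ((lam i : ℂ)) := by
    have : ((LinearMap.charpoly A).map (algebraMap ℝ ℂ)).eval (algebraMap ℝ ℂ (lam i)) = 0 := by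
      rw [Polynomial.eval_map, Polynomial.eval₂_at_apply, hroot.eq_zero, map_zero]
    simpa using this
  have habs := hA _ hroot2
  rw [Complex.norm_real] at habs
  intro h
  rw [h] at habs
  norm_num at habs

/-- Main transfer lemma: density with respect to `A₁` implies density with respect to `A₂`
when the two maps are simultaneously diagonal with eigenvalues of equal absolute values. -/
private lemma key {d : ℕ} (hd : 1 ≤ d)
    (A₁ A₂ : EuclideanSpace ℝ (Fin d) →ₗ[ℝ] EuclideanSpace ℝ (Fin d))
    (u : Module.Basis (Fin d) ℝ (EuclideanSpace ℝ (Fin d))) (lam₁ lam₂ : Fin d → ℝ)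
    (hu₁ : ∀ i, A₁ (u i) = lam₁ i • u i) (hu₂ : ∀ i, A₂ (u i) = lam₂ i • u i)
    (hne₁ : ∀ i, lam₁ i ≠ 0) (habs : ∀ i, |lam₁ i| = |lam₂ i|)
    (E : Set (EuclideanSpace ℝ (Fin d))) (hE : MeasurableSet E)
    (h : HasADensityZero A₁ E) : HasADensityZero A₂ E := by
  haveI : Nontrivial (EuclideanSpace ℝ (Fin d)) := by
    apply Module.nontrivial_of_finrank_pos (R := ℝ)
    rw [finrank_euclideanSpace_fin]
    omega
  set ε : Fin d → ℝ := fun i => lam₂ i / lam₁ i with hεdef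
  have hεabs : ∀ i, |ε i| = 1 := by
    intro i
    rw [hεdef]
    simp only [abs_div, ← habs i]
    exact div_self (abs_ne_zero.2 (hne₁ i))
  have hεsq : ∀ i, ε i * ε i = 1 := by
    intro i
    have h1 := hεabs i
    rcases abs_eq (by norm_num : (0:ℝ) ≤ 1) |>.1 h1 with h2 | h2 <;> rw [h2] <;> norm_num
  set D : EuclideanSpace ℝ (Fin d) →ₗ[ℝ] EuclideanSpace ℝ (Fin d) :=
    u.constr ℝ (fun i => ε i • u i) with hDdef
  have hDu : ∀ i, D (u i) = ε i • u i := fun i => u.constr_basis ℝ _ i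
  have hεlam : ∀ i, ε i * lam₁ i = lam₂ i := fun i => div_mul_cancel₀ _ (hne₁ i)
  have hA : A₂ = A₁ * D := by
    apply u.ext
    intro i
    rw [Module.End.mul_apply, hDu, _root_.map_smul, hu₁, hu₂, smul_smul, hεlam]
  have hComm : Commute A₁ D := by
    apply u.ext
    intro i
    simp only [Module.End.mul_apply, _root_.map_smul, hDu, hu₁, smul_smul]
    rw [mul_comm]
  have hD2 : D * D = 1 := by
    apply u.ext
    intro i
    rw [Module.End.mul_apply, hDu, _root_.map_smul, hDu, smul_smul, hεsq, one_smul, Module.End.one_apply]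
  have hDj : ∀ j : ℕ, D ^ j = 1 ∨ D ^ j = D := by
    intro j
    induction j with
    | zero => left; rw [pow_zero]
    | succ n ih =>
      rcases ih with hh | hh
      · right; rw [pow_succ, hh, one_mul]
      · left; rw [pow_succ, hh, hD2]
  -- norm bounds
  set Dc := LinearMap.toContinuousLinearMap D with hDcdef
  set c : ℝ := max ‖Dc‖ 1 with hcdef
  have hc1 : (1:ℝ) ≤ c := le_max_right _ _
  have hc0 : (0:ℝ) < c := lt_of_lt_of_le one_pos hc1
  have hDle : ∀ x, ‖D x‖ ≤ c * ‖x‖ := by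
    intro x
    have h1 : ‖Dc x‖ ≤ ‖Dc‖ * ‖x‖ := Dc.le_opNorm x
    have h2 : Dc x = D x := rfl
    rw [h2] at h1
    exact h1.trans (mul_le_mul_of_nonneg_right (le_max_left _ _) (norm_nonneg x))
  have hDD : ∀ x, D (D x) = x := by
    intro x
    have := LinearMap.ext_iff.1 hD2 x
    rwa [Module.End.mul_apply, Module.End.one_apply] at this
  have hDge : ∀ x, ‖x‖ ≤ c * ‖D x‖ := by
    intro x
    conv_lhs => rw [← hDD x]
    exact hDle (D x)
  have hDjle : ∀ (j : ℕ) x, ‖(D ^ j) x‖ ≤ c * ‖x‖ := by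
    intro j x
    rcases hDj j with hh | hh <;> rw [hh]
    · rw [Module.End.one_apply]
      exact le_mul_of_one_le_left (norm_nonneg x) hc1
    · exact hDle x
  have hDjge : ∀ (j : ℕ) x, ‖x‖ ≤ c * ‖(D ^ j) x‖ := by
    intro j x
    rcases hDj j with hh | hh <;> rw [hh]
    · rw [Module.End.one_apply]
      exact le_mul_of_one_le_left (norm_nonneg x) hc1
    · exact hDge x
  -- determinant facts
  have hdetA : LinearMap.det A₁ ≠ 0 := by
    rw [det_of_diag A₁ u lam₁ hu₁]
    exact Finset.prod_ne_zero_iff.2 fun i _ => hne₁ i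
  have hdetAj : ∀ j : ℕ, LinearMap.det (A₁ ^ j) ≠ 0 := by
    intro j
    rw [map_pow]
    exact pow_ne_zero _ hdetA
  have hdetD : |LinearMap.det D| = 1 := by
    rw [det_of_diag D u ε hDu, Finset.abs_prod]
    simp [hεabs]
  have hdetDj : ∀ j : ℕ, |LinearMap.det (D ^ j)| = 1 := by
    intro j
    rcases hDj j with hh | hh <;> rw [hh]
    · simp
    · exact hdetD
  intro r hr
  set S : ℕ → ℝ → Set (EuclideanSpace ℝ (Fin d)) :=
    fun j ρ => ⇑(A₁ ^ j) ⁻¹' ball 0 ρ with hSdef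
  set T : ℕ → Set (EuclideanSpace ℝ (Fin d)) :=
    fun j => ⇑(A₂ ^ j) ⁻¹' ball 0 r with hTdef
  have volS : ∀ (j : ℕ) (ρ : ℝ), volume (S j ρ) =
      ENNReal.ofReal |(LinearMap.det (A₁ ^ j))⁻¹| *
        volume (ball (0 : EuclideanSpace ℝ (Fin d)) ρ) :=
    fun j ρ => Measure.addHaar_preimage_linearMap volume (hdetAj j) _
  have hSne : ∀ (j : ℕ) (ρ : ℝ), 0 < ρ → volume (S j ρ) ≠ 0 ∧ volume (S j ρ) ≠ ⊤ := by
    intro j ρ hρ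
    rw [volS]
    constructor
    · apply mul_ne_zero
      · simp only [ne_eq, ENNReal.ofReal_eq_zero, not_le]
        exact abs_pos.2 (inv_ne_zero (hdetAj j))
      · exact (measure_ball_pos volume _ hρ).ne'
    · exact ENNReal.mul_ne_top ENNReal.ofReal_ne_top measure_ball_lt_top.ne
  -- relation between A₂ and A₁ preimages
  have hAx : ∀ (j : ℕ) x, (A₂ ^ j) x = (D ^ j) ((A₁ ^ j) x) := by
    intro j x
    rw [hA, Commute.mul_pow hComm, (hComm.pow_pow j j).eq, Module.End.mul_apply]
  have hT_eq : ∀ j : ℕ, T j = ⇑(D ^ j) ∘ ⇑(A₁ ^ j) ⁻¹' ball 0 r := by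
    intro j
    ext x
    simp only [hTdef, Set.mem_preimage, Function.comp_apply, hAx j x]
  have hvolT : ∀ j : ℕ, volume (T j) = volume (S j r) := by
    intro j
    have h1 : T j = ⇑(A₁ ^ j) ⁻¹' (⇑(D ^ j) ⁻¹' ball 0 r) := by
      ext x
      simp only [hTdef, Set.mem_preimage, hAx j x]
    have hdetDjne : LinearMap.det (D ^ j) ≠ 0 := by
      intro hh
      have := hdetDj j
      rw [hh, abs_zero] at this
      norm_num at this
    rw [h1, Measure.addHaar_preimage_linearMap volume (hdetAj j),
      Measure.addHaar_preimage_linearMap volume hdetDjne, volS,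
      abs_inv (LinearMap.det (D ^ j)), hdetDj j]
    norm_num
  have hdetDjne : ∀ j : ℕ, LinearMap.det (D ^ j) ≠ 0 := by
    intro j hh
    have := hdetDj j
    rw [hh, abs_zero] at this
    norm_num at this
  have hTsub : ∀ j : ℕ, T j ⊆ S j (c * r) := by
    intro j x hx
    simp only [hTdef, Set.mem_preimage, mem_ball_zero_iff] at hx
    simp only [hSdef, Set.mem_preimage, mem_ball_zero_iff]
    rw [hAx j x] at hx
    calc ‖(A₁ ^ j) x‖ ≤ c * ‖(D ^ j) ((A₁ ^ j) x)‖ := hDjge j _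
      _ < c * r := mul_lt_mul_of_pos_left hx hc0
  have hcr : 0 < c * r := mul_pos hc0 hr
  set K : ENNReal := ENNReal.ofReal (c ^ d) with hKdef
  have hK0 : K ≠ 0 := by
    rw [hKdef]
    simp only [ne_eq, ENNReal.ofReal_eq_zero, not_le]
    positivity
  have hKt : K ≠ ⊤ := ENNReal.ofReal_ne_top
  have hscale : ∀ j : ℕ, volume (S j (c * r)) = K * volume (S j r) := by
    intro j
    rw [volS, volS, Measure.addHaar_ball volume _ hcr.le, Measure.addHaar_ball volume _ hr.le,
      finrank_euclideanSpace_fin, mul_pow, ENNReal.ofReal_mul (by positivity)]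
    ring
  have hpart : ∀ s : Set (EuclideanSpace ℝ (Fin d)),
      volume (E ∩ s) + volume (s \ E) = volume s := by
    intro s
    rw [Set.inter_comm]
    exact measure_inter_add_diff s hE
  have hratio : ∀ s : Set (EuclideanSpace ℝ (Fin d)), volume s ≠ 0 → volume s ≠ ⊤ →
      volume (E ∩ s) / volume s = 1 - volume (s \ E) / volume s := by
    intro s h0 ht
    have hsum : volume (E ∩ s) / volume s + volume (s \ E) / volume s = 1 := by
      rw [ENNReal.div_add_div_same, hpart s, ENNReal.div_self h0 ht]
    refine ENNReal.eq_sub_of_add_eq ?_ hsum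
    exact (ENNReal.div_lt_top (ne_top_of_le_ne_top ht (measure_mono Set.diff_subset)) h0).ne
  have hratio₂ : ∀ s : Set (EuclideanSpace ℝ (Fin d)), volume s ≠ 0 → volume s ≠ ⊤ →
      volume (s \ E) / volume s = 1 - volume (E ∩ s) / volume s := by
    intro s h0 ht
    have hsum : volume (s \ E) / volume s + volume (E ∩ s) / volume s = 1 := by
      rw [ENNReal.div_add_div_same, add_comm, hpart s, ENNReal.div_self h0 ht]
    refine ENNReal.eq_sub_of_add_eq ?_ hsum
    exact (ENNReal.div_lt_top (ne_top_of_le_ne_top ht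
      (measure_mono Set.inter_subset_right)) h0).ne
  have h1 := h (c * r) hcr
  have hw0 : Tendsto (fun j : ℕ => volume (S j (c * r) \ E) / volume (S j (c * r)))
      atTop (𝓝 0) := by
    have hcont : Tendsto
        (fun j : ℕ => 1 - volume (E ∩ S j (c * r)) / volume (S j (c * r)))
        atTop (𝓝 (1 - 1)) :=
      ((ENNReal.continuous_sub_left ENNReal.one_ne_top).tendsto 1).comp h1
    rw [tsub_self] at hcont
    refine hcont.congr fun j => ?_
    exact (hratio₂ _ (hSne j _ hcr).1 (hSne j _ hcr).2).symm
  have hvolTne : ∀ j : ℕ, volume (T j) ≠ 0 ∧ volume (T j) ≠ ⊤ := by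
    intro j
    rw [hvolT j]
    exact hSne j r hr
  have hxle : ∀ j : ℕ, volume (T j \ E) / volume (T j) ≤
      K * (volume (S j (c * r) \ E) / volume (S j (c * r))) := by
    intro j
    rw [hvolT j]
    calc volume (T j \ E) / volume (S j r)
        ≤ volume (S j (c * r) \ E) / volume (S j r) :=
          ENNReal.div_le_div_right
            (measure_mono (Set.diff_subset_diff_left (hTsub j))) _
      _ = K * (volume (S j (c * r) \ E) / volume (S j (c * r))) := by
          rw [hscale j, ← mul_div_assoc, ENNReal.mul_div_mul_left _ _ hK0 hKt]
  have hx0 : Tendsto (fun j : ℕ => volume (T j \ E) / volume (T j)) atTop (𝓝 0) := by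
    have hKw : Tendsto
        (fun j : ℕ => K * (volume (S j (c * r) \ E) / volume (S j (c * r))))
        atTop (𝓝 0) := by
      have := ENNReal.Tendsto.const_mul hw0 (Or.inr hKt)
      simpa using this
    exact tendsto_of_tendsto_of_tendsto_of_le_of_le tendsto_const_nhds hKw
      (fun j => zero_le) hxle
  have hfin : Tendsto (fun j : ℕ => 1 - volume (T j \ E) / volume (T j))
      atTop (𝓝 (1 - 0)) :=
    ((ENNReal.continuous_sub_left ENNReal.one_ne_top).tendsto 0).comp hx0
  rw [tsub_zero] at hfin
  refine hfin.congr fun j => ?_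
  exact (hratio (T j) (hvolTne j).1 (hvolTne j).2).symm

theorem stmt_8 {d : ℕ} (hd : 1 ≤ d)
    (A₁ A₂ : EuclideanSpace ℝ (Fin d) →ₗ[ℝ] EuclideanSpace ℝ (Fin d))
    (hA₁ : IsExpansive A₁) (hA₂ : IsExpansive A₂)
    (u : Module.Basis (Fin d) ℝ (EuclideanSpace ℝ (Fin d))) (lam₁ lam₂ : Fin d → ℝ)
    (hu₁ : ∀ i, A₁ (u i) = lam₁ i • u i) (hu₂ : ∀ i, A₂ (u i) = lam₂ i • u i)
    (habs : ∀ i, |lam₁ i| = |lam₂ i|) :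
    densityFamily A₁ = densityFamily A₂ := by
  have hne₁ : ∀ i, lam₁ i ≠ 0 := lam_ne_zero hA₁ u lam₁ hu₁
  have hne₂ : ∀ i, lam₂ i ≠ 0 := lam_ne_zero hA₂ u lam₂ hu₂
  ext E
  simp only [densityFamily, Set.mem_setOf_eq]
  constructor
  · rintro ⟨hEm, hEd⟩
    exact ⟨hEm, key hd A₁ A₂ u lam₁ lam₂ hu₁ hu₂ hne₁ habs E hEm hEd⟩
  · rintro ⟨hEm, hEd⟩
    exact ⟨hEm, key hd A₂ A₁ u lam₂ lam₁ hu₂ hu₁ hne₂ (fun i => (habs i).symm) E hEm hEd⟩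
end
end

section
/- Let A : ℝ² → ℝ² be the diagonal linear map with matrix diag(λ₁, λ₂), where λ₁, λ₂ ∈ ℝ and λ₁, λ₂ > 1. For α > 0 let E_α = {(x₁, x₂) ∈ ℝ² : |x₂| ≥ |x₁|^α}, and set α₁,₂ := log λ₂ / log λ₁. Then E_α ∈ 𝓔_A if and only if α > α₁,₂. -/
open MeasureTheory Filter Metric Topology
open scoped ENNReal

noncomputable section

/-- Every coordinate of a point of Euclidean space is bounded by the norm. -/
private lemma coord_le_norm {n : ℕ} (x : EuclideanSpace ℝ (Fin n)) (i : Fin n) : |x i| ≤ ‖x‖ := by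
  rw [EuclideanSpace.norm_eq, ← Real.sqrt_sq_eq_abs]
  apply Real.sqrt_le_sqrt
  have := Finset.single_le_sum (f := fun j => ‖x j‖ ^ 2) (fun j _ => sq_nonneg _)
    (Finset.mem_univ i)
  simpa [Real.norm_eq_abs, sq_abs] using this

/-- Determinant of a coordinatewise (diagonal) linear map of the Euclidean plane. -/
private lemma det_diag (A : EuclideanSpace ℝ (Fin 2) →ₗ[ℝ] EuclideanSpace ℝ (Fin 2))
    (d : Fin 2 → ℝ) (hA : ∀ x i, A x i = d i * x i) : LinearMap.det A = d 0 * d 1 := by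
  classical
  let b := PiLp.basisFun 2 ℝ (Fin 2)
  rw [← LinearMap.det_toMatrix b]
  have h : LinearMap.toMatrix b b A = Matrix.diagonal d := by
    ext i k
    rw [LinearMap.toMatrix_apply, PiLp.basisFun_repr, hA]
    have : (b k) i = if i = k then 1 else 0 := by
      simp [b, PiLp.basisFun_apply, Pi.single_apply]
    rw [this, Matrix.diagonal_apply]
    split <;> simp
  rw [h, Matrix.det_diagonal]
  simp [Fin.prod_univ_two]

/-- The volume of a coordinate box in the Euclidean plane. -/
private lemma box_volume (a b : ℝ) :
    volume {x : EuclideanSpace ℝ (Fin 2) | |x 0| ≤ a ∧ |x 1| ≤ b}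
      = ENNReal.ofReal (2 * a) * ENNReal.ofReal (2 * b) := by
  have hm : MeasurableSet {x : EuclideanSpace ℝ (Fin 2) | |x 0| ≤ a ∧ |x 1| ≤ b} := by
    apply MeasurableSet.inter
    · exact measurableSet_le ((measurable_pi_apply 0).comp (WithLp.measurable_ofLp 2 _)).abs measurable_const
    · exact measurableSet_le ((measurable_pi_apply 1).comp (WithLp.measurable_ofLp 2 _)).abs measurable_const
  rw [← ((EuclideanSpace.volume_preserving_symm_measurableEquiv_toLp (Fin 2)).symm).measure_preimage
    hm.nullMeasurableSet]
  have : (MeasurableEquiv.toLp 2 (Fin 2 → ℝ)).symm.symm ⁻¹'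
      {x : EuclideanSpace ℝ (Fin 2) | |x 0| ≤ a ∧ |x 1| ≤ b}
      = Set.univ.pi (fun i : Fin 2 => Set.Icc (-(![a,b] i)) (![a,b] i)) := by
    ext y
    simp only [Set.mem_preimage, MeasurableEquiv.symm_symm, MeasurableEquiv.coe_toLp, PiLp.toLp_apply, Set.mem_setOf_eq, Set.mem_pi, Set.mem_univ, true_imp_iff,
      Set.mem_Icc, Fin.forall_fin_two]
    constructor
    · rintro ⟨h0, h1⟩
      exact ⟨abs_le.mp h0, abs_le.mp h1⟩
    · rintro ⟨h0, h1⟩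
      exact ⟨abs_le.mpr h0, abs_le.mpr h1⟩
  rw [this, volume_pi_pi]
  simp [Real.volume_Icc, Fin.prod_univ_two]
  congr 1 <;> ring_nf
  all_goals rw [ENNReal.ofReal_mul' (by norm_num)]; simp

/-- The key pointwise equivalence defining the image of `E_α` under the diagonal map. -/
private lemma key_iff (lam₁ lam₂ α : ℝ) (h1 : 0 < lam₁) (h2 : 0 < lam₂) (j : ℕ) (u v : ℝ) :
    (lam₂ * lam₁ ^ (-α)) ^ j * |lam₁ ^ j * u| ^ α ≤ |lam₂ ^ j * v| ↔ |u| ^ α ≤ |v| := by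
  have h1j : (0:ℝ) < lam₁ ^ j := pow_pos h1 j
  have h2j : (0:ℝ) < lam₂ ^ j := pow_pos h2 j
  rw [abs_mul, abs_mul, abs_of_pos h1j, abs_of_pos h2j,
    Real.mul_rpow h1j.le (abs_nonneg u), mul_pow]
  have hc : (lam₁ ^ (-α)) ^ j * ((lam₁ ^ j : ℝ) ^ α) = 1 := by
    rw [← Real.rpow_natCast (lam₁ ^ (-α)) j, ← Real.rpow_natCast lam₁ j,
      ← Real.rpow_mul h1.le, ← Real.rpow_mul h1.le, ← Real.rpow_add h1]
    rw [show -α * j + (j:ℝ) * α = 0 by ring, Real.rpow_zero]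
  have key : lam₂ ^ j * (lam₁ ^ (-α)) ^ j * ((lam₁ ^ j : ℝ) ^ α * |u| ^ α)
      = lam₂ ^ j * |u| ^ α := by
    rw [show lam₂ ^ j * (lam₁ ^ (-α)) ^ j * ((lam₁ ^ j : ℝ) ^ α * |u| ^ α)
      = (lam₁ ^ (-α)) ^ j * ((lam₁ ^ j : ℝ) ^ α) * (lam₂ ^ j * |u| ^ α) by ring, hc, one_mul]
  rw [key, mul_le_mul_iff_right₀ h2j]

/-- If `q < 1`, the sets `{q^j |y₀|^α ≤ |y₁|}` fill up the ball asymptotically. -/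
private lemma tendsto_pos_case (q α r : ℝ) (hq0 : 0 < q) (hq1 : q < 1) (hα : 0 < α) (hr : 0 < r) :
    Tendsto (fun j : ℕ =>
      volume ({y : EuclideanSpace ℝ (Fin 2) | q ^ j * |y 0| ^ α ≤ |y 1|} ∩ ball 0 r) /
        volume (ball (0 : EuclideanSpace ℝ (Fin 2)) r)) atTop (𝓝 1) := by
  set V := volume (ball (0 : EuclideanSpace ℝ (Fin 2)) r) with hV
  have hV0 : V ≠ 0 := (measure_ball_pos volume 0 hr).ne'
  have hVtop : V ≠ ⊤ := measure_ball_lt_top.ne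
  set K : ℕ → ℝ≥0∞ := fun j =>
    volume ({y : EuclideanSpace ℝ (Fin 2) | q ^ j * |y 0| ^ α ≤ |y 1|} ∩ ball 0 r) with hK
  set bad : ℕ → ℝ≥0∞ := fun j =>
    volume {x : EuclideanSpace ℝ (Fin 2) | |x 0| ≤ r ∧ |x 1| ≤ q ^ j * r ^ α} with hbad
  have hbad_eq : ∀ j, bad j = ENNReal.ofReal (2 * r) * ENNReal.ofReal (2 * (q ^ j * r ^ α)) := by
    intro j
    exact box_volume r (q ^ j * r ^ α)
  have hcover : ∀ j : ℕ, ball (0 : EuclideanSpace ℝ (Fin 2)) r ⊆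
      ({y : EuclideanSpace ℝ (Fin 2) | q ^ j * |y 0| ^ α ≤ |y 1|} ∩ ball 0 r) ∪
      {x : EuclideanSpace ℝ (Fin 2) | |x 0| ≤ r ∧ |x 1| ≤ q ^ j * r ^ α} := by
    intro j x hx
    by_cases h : q ^ j * |x 0| ^ α ≤ |x 1|
    · exact Or.inl ⟨h, hx⟩
    · push_neg at h
      have hx0 : |x 0| ≤ r := (coord_le_norm x 0).trans (mem_ball_zero_iff.mp hx).le
      refine Or.inr ⟨hx0, le_trans h.le ?_⟩
      exact mul_le_mul_of_nonneg_left
        (Real.rpow_le_rpow (abs_nonneg _) hx0 hα.le) (pow_nonneg hq0.le j)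
  have hle : ∀ j, V - bad j ≤ K j := by
    intro j
    rw [tsub_le_iff_right]
    exact le_trans (measure_mono (hcover j)) (measure_union_le _ _)
  have hbad0 : Tendsto bad atTop (𝓝 0) := by
    have h1 : Tendsto (fun j : ℕ => 2 * (q ^ j * r ^ α)) atTop (𝓝 0) := by
      have := tendsto_pow_atTop_nhds_zero_of_lt_one hq0.le hq1
      have := (this.mul_const (r ^ α)).const_mul 2
      simpa using this
    have h2 := ENNReal.tendsto_ofReal h1
    have h3 := ENNReal.Tendsto.const_mul (a := ENNReal.ofReal (2 * r)) h2
      (Or.inr ENNReal.ofReal_ne_top)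
    simp only [ENNReal.ofReal_zero, mul_zero] at h3
    exact (funext hbad_eq : bad = _) ▸ h3
  have hKtend : Tendsto K atTop (𝓝 V) := by
    have hlow : Tendsto (fun j => V - bad j) atTop (𝓝 V) := by
      have := ENNReal.Tendsto.sub (tendsto_const_nhds (x := V)) hbad0 (Or.inl hVtop)
      simpa using this
    exact tendsto_of_tendsto_of_tendsto_of_le_of_le hlow tendsto_const_nhds hle
      (fun j => measure_mono Set.inter_subset_right)
  have h9 := ENNReal.Tendsto.div_const (b := V) hKtend (Or.inl hV0)
  rw [ENNReal.div_self hV0 hVtop] at h9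
  exact h9

/-- If `q ≥ 1`, the density ratio cannot tend to `1` (for the unit ball). -/
private lemma neg_case (q α : ℝ) (hq1 : 1 ≤ q) (hα : 0 < α)
    (h : Tendsto (fun j : ℕ =>
      volume ({y : EuclideanSpace ℝ (Fin 2) | q ^ j * |y 0| ^ α ≤ |y 1|} ∩ ball 0 1) /
        volume (ball (0 : EuclideanSpace ℝ (Fin 2)) 1)) atTop (𝓝 1)) : False := by
  set V := volume (ball (0 : EuclideanSpace ℝ (Fin 2)) 1) with hV
  have hV0 : V ≠ 0 := (measure_ball_pos volume 0 one_pos).ne'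
  have hVtop : V ≠ ⊤ := measure_ball_lt_top.ne
  set p : EuclideanSpace ℝ (Fin 2) := !₂[1/2, 0] with hp
  have hp0 : p 0 = 1/2 := rfl
  have hp1 : p 1 = 0 := rfl
  have hpnorm : ‖p‖ = 1/2 := by
    rw [EuclideanSpace.norm_eq]
    rw [Fin.sum_univ_two, hp0, hp1]
    rw [show ‖(1/2 : ℝ)‖ ^ 2 + ‖(0:ℝ)‖ ^ 2 = (1/2)^2 by
      norm_num [Real.norm_eq_abs]]
    rw [Real.sqrt_sq (by norm_num)]
  set ε : ℝ := min (1/4) ((1/4 : ℝ) ^ α) with hε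
  have hε0 : 0 < ε := lt_min (by norm_num) (Real.rpow_pos_of_pos (by norm_num) α)
  have hsub : ∀ j : ℕ, ball p ε ⊆ ball (0 : EuclideanSpace ℝ (Fin 2)) 1 \
      {y : EuclideanSpace ℝ (Fin 2) | q ^ j * |y 0| ^ α ≤ |y 1|} := by
    intro j x hx
    have hd : ‖x - p‖ < ε := by rwa [← dist_eq_norm, ← mem_ball]
    have h0 : |x 0 - 1/2| < ε := by
      have := coord_le_norm (x - p) 0
      rw [show (x - p) 0 = x 0 - p 0 from rfl, hp0] at this
      linarith
    have h1 : |x 1| < ε := by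
      have := coord_le_norm (x - p) 1
      rw [show (x - p) 1 = x 1 - p 1 from rfl, hp1, sub_zero] at this
      linarith
    have hx14 : (1/4 : ℝ) ≤ |x 0| := by
      have hεle : ε ≤ 1/4 := min_le_left _ _
      have := abs_le.mp h0.le
      have : (1/4 : ℝ) ≤ x 0 := by linarith
      calc (1/4 : ℝ) ≤ x 0 := this
        _ ≤ |x 0| := le_abs_self _
    constructor
    · rw [mem_ball_zero_iff]
      calc ‖x‖ = ‖x - p + p‖ := by rw [sub_add_cancel]
        _ ≤ ‖x - p‖ + ‖p‖ := norm_add_le _ _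
        _ < ε + 1/2 := by rw [hpnorm]; linarith
        _ ≤ 1/4 + 1/2 := by have := min_le_left (1/4:ℝ) ((1/4:ℝ)^α); linarith
        _ < 1 := by norm_num
    · intro hc
      have hc' : q ^ j * |x 0| ^ α ≤ |x 1| := hc
      have hge : (1/4 : ℝ) ^ α ≤ q ^ j * |x 0| ^ α := by
        have h14 : (1/4 : ℝ) ^ α ≤ |x 0| ^ α :=
          Real.rpow_le_rpow (by norm_num) hx14 hα.le
        have hqj : (1:ℝ) ≤ q ^ j := one_le_pow₀ hq1
        calc (1/4 : ℝ) ^ α ≤ |x 0| ^ α := h14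
          _ ≤ q ^ j * |x 0| ^ α := le_mul_of_one_le_left (Real.rpow_nonneg (abs_nonneg _) α) hqj
      have : (1/4 : ℝ) ^ α ≤ |x 1| := hge.trans hc'
      have : ε ≤ |x 1| := le_trans (min_le_right _ _) this
      linarith
  set g := volume (ball p ε) with hg
  have hg0 : g ≠ 0 := (measure_ball_pos volume p hε0).ne'
  have hKle : ∀ j : ℕ,
      volume ({y : EuclideanSpace ℝ (Fin 2) | q ^ j * |y 0| ^ α ≤ |y 1|} ∩ ball 0 1) ≤ V - g := by
    intro j
    apply ENNReal.le_sub_of_add_le_right (measure_ball_lt_top.ne)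
    rw [← measure_union ?hd measurableSet_ball]
    · apply measure_mono
      apply Set.union_subset Set.inter_subset_right
      intro x hx
      exact ((hsub j) hx).1
    case hd =>
      rw [Set.disjoint_left]
      intro a ha hab
      exact ((hsub j) hab).2 ha.1
  have hle : (1:ℝ≥0∞) ≤ (V - g) / V := by
    apply le_of_tendsto' h
    intro j
    exact ENNReal.div_le_div_right (hKle j) V
  have hlt : (V - g) / V < 1 := by
    rw [ENNReal.div_lt_iff (Or.inl hV0) (Or.inl hVtop), one_mul]
    exact ENNReal.sub_lt_self hVtop hV0 hg0
  exact absurd hle (not_le.mpr hlt)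

theorem stmt_9 (lam₁ lam₂ : ℝ) (hlam₁ : 1 < lam₁) (hlam₂ : 1 < lam₂)
    (A : EuclideanSpace ℝ (Fin 2) →ₗ[ℝ] EuclideanSpace ℝ (Fin 2))
    (hA : ∀ (x : EuclideanSpace ℝ (Fin 2)) (i : Fin 2), A x i = ![lam₁, lam₂] i * x i)
    (α : ℝ) (hα : 0 < α)
    (Eα : Set (EuclideanSpace ℝ (Fin 2)))
    (hEα : Eα = {x : EuclideanSpace ℝ (Fin 2) | |x 0| ^ α ≤ |x 1|}) :
    Eα ∈ densityFamily A ↔ Real.log lam₂ / Real.log lam₁ < α := by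
  have hl1 : (0:ℝ) < lam₁ := lt_trans one_pos hlam₁
  have hl2 : (0:ℝ) < lam₂ := lt_trans one_pos hlam₂
  set q : ℝ := lam₂ * lam₁ ^ (-α) with hq
  have hq0 : 0 < q := mul_pos hl2 (Real.rpow_pos_of_pos hl1 _)
  have hq_iff : q < 1 ↔ Real.log lam₂ / Real.log lam₁ < α := by
    rw [hq, Real.rpow_neg hl1.le, ← div_eq_mul_inv,
      div_lt_one (Real.rpow_pos_of_pos hl1 α), Real.lt_rpow_iff_log_lt hl2 hl1,
      div_lt_iff₀ (Real.log_pos hlam₁)]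
  have hEmeas : MeasurableSet Eα := by
    rw [hEα]
    apply measurableSet_le
    · exact (((measurable_pi_apply 0).comp (WithLp.measurable_ofLp 2 _)).abs.pow_const α)
    · exact ((measurable_pi_apply 1).comp (WithLp.measurable_ofLp 2 _)).abs
  -- the key reduction of the density ratio
  have hratio : ∀ (r : ℝ) (j : ℕ),
      volume (Eα ∩ ⇑(A ^ j) ⁻¹' ball (0 : EuclideanSpace ℝ (Fin 2)) r) /
          volume (⇑(A ^ j) ⁻¹' ball (0 : EuclideanSpace ℝ (Fin 2)) r)
        = volume ({y : EuclideanSpace ℝ (Fin 2) | q ^ j * |y 0| ^ α ≤ |y 1|}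
            ∩ ball 0 r) / volume (ball (0 : EuclideanSpace ℝ (Fin 2)) r) := by
    intro r j
    have hpow : ∀ (x : EuclideanSpace ℝ (Fin 2)) (i : Fin 2),
        (A ^ j) x i = (![lam₁, lam₂] i) ^ j * x i := by
      intro x i
      induction j generalizing x with
      | zero => simp [Module.End.one_apply]
      | succ n ih =>
          rw [pow_succ, Module.End.mul_apply, ih, hA]
          ring
    have hdet : LinearMap.det (A ^ j) = lam₁ ^ j * lam₂ ^ j := by
      have := det_diag (A ^ j) (fun i => (![lam₁, lam₂] i) ^ j) hpow
      simpa using this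
    have hdetne : LinearMap.det (A ^ j) ≠ 0 := by
      rw [hdet]; positivity
    have hpre : ⇑(A ^ j) ⁻¹'
        ({y : EuclideanSpace ℝ (Fin 2) | q ^ j * |y 0| ^ α ≤ |y 1|} ∩ ball 0 r)
        = Eα ∩ ⇑(A ^ j) ⁻¹' ball 0 r := by
      rw [Set.preimage_inter]
      congr 1
      ext x
      simp only [Set.mem_preimage, Set.mem_setOf_eq, hEα]
      rw [hpow x 0, hpow x 1]
      simpa using key_iff lam₁ lam₂ α hl1 hl2 j (x 0) (x 1)
    rw [← hpre, Measure.addHaar_preimage_linearMap volume hdetne,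
      Measure.addHaar_preimage_linearMap volume hdetne,
      ENNReal.mul_div_mul_left _ _ (by
        simp only [ne_eq, ENNReal.ofReal_eq_zero, not_le]
        have : (LinearMap.det (A ^ j))⁻¹ ≠ 0 := inv_ne_zero hdetne
        positivity) ENNReal.ofReal_ne_top]
  constructor
  · intro hmem
    by_contra hnot
    have hq1 : 1 ≤ q := not_lt.mp (fun hc => hnot (hq_iff.mp hc))
    exact neg_case q α hq1 hα ((hmem.2 1 one_pos).congr (fun j => hratio 1 j))
  · intro hlt
    refine ⟨hEmeas, ?_⟩
    intro r hr
    exact (tendsto_pos_case q α r hq0 (hq_iff.mpr hlt) hα hr).congr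
      (fun j => (hratio r j).symm)
end
end

section
/- Let A : ℝ^d → ℝ^d be a positive expansive linear map with distinct eigenvalues 1 < β₁ < β₂ < … < β_k (k ≥ 2), and let U₁ be the eigenspace of A for the smallest eigenvalue β₁, with dim U₁ < d. For δ > 0 define G_δ := {x = y + z : y ∈ U₁, z ∈ U₁⊥, ‖z‖ < δ‖y‖}. Then G_δ ∈ 𝓔_A. -/
open MeasureTheory Filter Metric Topology

noncomputable section

lemma boxVol {d : ℕ} (b : OrthonormalBasis (Fin d) ℝ (EuclideanSpace ℝ (Fin d)))
    (c : Fin d → ℝ) :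
    volume {x : EuclideanSpace ℝ (Fin d) | ∀ i, |b.repr x i| ≤ c i} =
      ∏ i, ENNReal.ofReal (2 * c i) := by
  have hset : {x : EuclideanSpace ℝ (Fin d) | ∀ i, |b.repr x i| ≤ c i} =
      ⇑b.repr ⁻¹' (⇑((MeasurableEquiv.toLp 2 (Fin d → ℝ)).symm) ⁻¹'
        Set.pi Set.univ fun i => Set.Icc (-(c i)) (c i)) := by
    ext x
    simp only [Set.mem_setOf_eq, Set.mem_preimage, Set.mem_pi, Set.mem_univ, forall_true_left,
      Set.mem_Icc, MeasurableEquiv.coe_toLp_symm, true_implies]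
    constructor
    · intro h i
      have := abs_le.mp (h i)
      exact this
    · intro h i
      exact abs_le.mpr (h i)
  rw [hset]
  have hmeas : MeasurableSet (Set.pi Set.univ fun i => Set.Icc (-(c i)) (c i)) :=
    MeasurableSet.univ_pi fun i => measurableSet_Icc
  rw [b.measurePreserving_repr.measure_preimage
    ((((MeasurableEquiv.toLp 2 (Fin d → ℝ)).symm).measurable hmeas)).nullMeasurableSet]
  rw [(EuclideanSpace.volume_preserving_symm_measurableEquiv_toLp (Fin d)).measure_preimage
    hmeas.nullMeasurableSet]
  rw [volume_pi_pi]
  congr 1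
  funext i
  rw [Real.volume_Icc]
  congr 1
  ring

set_option maxHeartbeats 2000000 in
theorem stmt_10 {d : ℕ} (hd : 1 ≤ d)
    (A : EuclideanSpace ℝ (Fin d) →ₗ[ℝ] EuclideanSpace ℝ (Fin d))
    (hsym : LinearMap.IsSymmetric A)
    (heig : ∀ μ : ℝ, Module.End.HasEigenvalue A μ → 1 < μ)
    (β₁ : ℝ) (hβ₁ : Module.End.HasEigenvalue A β₁)
    (hmin : ∀ μ : ℝ, Module.End.HasEigenvalue A μ → β₁ ≤ μ)
    (hU₁ : Module.finrank ℝ ↥(Module.End.eigenspace A β₁) < d)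
    (δ : ℝ) (hδ : 0 < δ)
    (G : Set (EuclideanSpace ℝ (Fin d)))
    (hG : G = {x | ∃ y ∈ Module.End.eigenspace A β₁,
        ∃ z ∈ (Module.End.eigenspace A β₁)ᗮ, x = y + z ∧ ‖z‖ < δ * ‖y‖}) :
    G ∈ densityFamily A := by
  classical
  have hrank : Module.finrank ℝ (EuclideanSpace ℝ (Fin d)) = d := finrank_euclideanSpace_fin
  set b := hsym.eigenvectorBasis hrank with hb
  set μ := hsym.eigenvalues hrank with hμ
  have hμA : ∀ (x : EuclideanSpace ℝ (Fin d)) i, b.repr (A x) i = μ i * b.repr x i :=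
    fun x i => hsym.eigenvectorBasis_apply_self_apply hrank x i
  set U₁ := Module.End.eigenspace A β₁ with hU
  -- membership in the eigenspace, in coordinates
  have memU : ∀ x : EuclideanSpace ℝ (Fin d),
      x ∈ U₁ ↔ ∀ i, μ i ≠ β₁ → b.repr x i = 0 := by
    intro x
    rw [hU, Module.End.mem_eigenspace_iff]
    constructor
    · intro h i hi
      have h1 : b.repr (A x) i = b.repr (β₁ • x) i := by rw [h]
      rw [hμA, _root_.map_smul] at h1
      simp only [PiLp.smul_apply, smul_eq_mul] at h1
      rcases mul_eq_mul_right_iff.mp h1 with h2 | h2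
      · exact absurd h2 hi
      · exact h2
    · intro h
      apply b.repr.injective
      ext i
      rw [hμA, _root_.map_smul]
      simp only [PiLp.smul_apply, smul_eq_mul]
      by_cases hi : μ i = β₁
      · rw [hi]
      · rw [h i hi]; ring
  have hinner : ∀ u x : EuclideanSpace ℝ (Fin d),
      (inner ℝ u x : ℝ) = ∑ i, b.repr u i * b.repr x i := by
    intro u x
    rw [← b.repr.inner_map_map u x]
    simp only [PiLp.inner_apply, RCLike.inner_apply, conj_trivial]
    exact Finset.sum_congr rfl fun i _ => mul_comm _ _
  have memUperp : ∀ x : EuclideanSpace ℝ (Fin d),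
      x ∈ U₁ᗮ ↔ ∀ i, μ i = β₁ → b.repr x i = 0 := by
    intro x
    constructor
    · intro h i hi
      have hbi : b i ∈ U₁ := by
        rw [memU]
        intro i' hi'
        rw [b.repr_self]
        by_cases hii : i' = i
        · exact absurd (hii ▸ hi) hi'
        · simp [EuclideanSpace.single_apply, hii]
      have := (Submodule.mem_orthogonal U₁ x).mp h (b i) hbi
      rw [hinner] at this
      rw [← this]
      rw [Finset.sum_eq_single i]
      · rw [b.repr_self]; simp [EuclideanSpace.single_apply]
      · intro j _ hj
        rw [b.repr_self]
        simp [EuclideanSpace.single_apply, hj]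
      · simp
    · intro h
      rw [Submodule.mem_orthogonal]
      intro u hu
      rw [hinner]
      apply Finset.sum_eq_zero
      intro i _
      by_cases hi : μ i = β₁
      · rw [h i hi, mul_zero]
      · rw [(memU u).mp hu i hi, zero_mul]
  -- norms and powers in coordinates
  have hnormsq : ∀ x : EuclideanSpace ℝ (Fin d), ‖x‖ ^ 2 = ∑ i, (b.repr x i) ^ 2 := by
    intro x
    rw [← real_inner_self_eq_norm_sq, hinner]
    simp [sq]
  have hpow : ∀ (j : ℕ) (x : EuclideanSpace ℝ (Fin d)) i,
      b.repr ((A ^ j) x) i = μ i ^ j * b.repr x i := by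
    intro j
    induction j with
    | zero => intro x i; simp
    | succ j ih =>
      intro x i
      have hs : (A ^ (j + 1)) x = (A ^ j) (A x) := by
        rw [pow_succ]; rfl
      rw [hs, ih, hμA, pow_succ]; ring
  -- the coordinate projection onto U₁ as a linear map
  let mask : EuclideanSpace ℝ (Fin d) → EuclideanSpace ℝ (Fin d) :=
    fun v => WithLp.toLp 2 (fun i => if μ i = β₁ then v i else 0 : Fin d → ℝ)
  let P : EuclideanSpace ℝ (Fin d) →ₗ[ℝ] EuclideanSpace ℝ (Fin d) :=
    { toFun := fun x => b.repr.symm (mask (b.repr x))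
      map_add' := by
        intro x y
        have hm : mask (b.repr (x + y)) = mask (b.repr x) + mask (b.repr y) := by
          ext i
          simp only [mask, _root_.map_add, PiLp.add_apply, PiLp.toLp_apply]
          split_ifs <;> simp
        show b.repr.symm (mask (b.repr (x + y))) = _
        rw [hm, map_add]
      map_smul' := by
        intro c x
        have hm : mask (b.repr (c • x)) = c • mask (b.repr x) := by
          ext i
          simp only [mask, _root_.map_smul, PiLp.smul_apply, smul_eq_mul, PiLp.toLp_apply]
          split_ifs <;> simp
        show b.repr.symm (mask (b.repr (c • x))) = _
        rw [hm, _root_.map_smul]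
        rfl }
  have hPrepr : ∀ x i, b.repr (P x) i = if μ i = β₁ then b.repr x i else 0 := by
    intro x i
    show b.repr (b.repr.symm (mask (b.repr x))) i = _
    rw [b.repr.apply_symm_apply]
  have hPmem : ∀ x, P x ∈ U₁ := by
    intro x
    rw [memU]
    intro i hi
    rw [hPrepr, if_neg hi]
  have hQmem : ∀ x, x - P x ∈ U₁ᗮ := by
    intro x
    rw [memUperp]
    intro i hi
    rw [map_sub]
    simp only [PiLp.sub_apply]
    rw [hPrepr, if_pos hi, sub_self]
  have hGiff : ∀ x, x ∈ G ↔ ‖x - P x‖ < δ * ‖P x‖ := by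
    intro x
    rw [hG]
    constructor
    · rintro ⟨y, hy, z, hz, rfl, hlt⟩
      have hyP : y = P (y + z) := by
        have hmem1 : y - P (y + z) ∈ U₁ := Submodule.sub_mem _ hy (hPmem _)
        have hmem2 : y - P (y + z) ∈ U₁ᗮ := by
          have hroute : y - P (y + z) = (y + z - P (y + z)) - z := by abel
          rw [hroute]
          exact Submodule.sub_mem _ (hQmem _) hz
        have h0 : (inner ℝ (y - P (y + z)) (y - P (y + z)) : ℝ) = 0 :=
          (Submodule.mem_orthogonal U₁ _).mp hmem2 _ hmem1
        have h0' := inner_self_eq_zero.mp h0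
        rw [sub_eq_zero] at h0'
        exact h0'
      rw [← hyP]
      have hyy : y + z - y = z := by abel
      rwa [hyy]
    · intro h
      exact ⟨P x, hPmem x, x - P x, hQmem x, by abel, h⟩
  have hPcont : Continuous P := P.continuous_of_finiteDimensional
  have hGmeas : MeasurableSet G := by
    have hset : G = {x | ‖x - P x‖ < δ * ‖P x‖} := Set.ext hGiff
    rw [hset]
    exact measurableSet_lt
      (continuous_norm.comp (continuous_id.sub hPcont)).measurable
      (continuous_const.mul (continuous_norm.comp hPcont)).measurable
  -- eigenvalue facts
  have hβ1 : 1 < β₁ := heig β₁ hβ₁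
  have hβ1pos : (0 : ℝ) < β₁ := lt_trans one_pos hβ1
  have hμge : ∀ i, β₁ ≤ μ i := fun i => hmin _ (hsym.hasEigenvalue_eigenvalues hrank i)
  have hμ1 : ∀ i, 1 ≤ μ i := fun i => le_trans hβ1.le (hμge i)
  have hμpos : ∀ i, (0 : ℝ) < μ i := fun i => lt_of_lt_of_le one_pos (hμ1 i)
  -- the second smallest eigenvalue
  set T : Finset (Fin d) := Finset.univ.filter (fun i => ¬ (μ i = β₁)) with hT
  have hTne : T.Nonempty := by
    by_contra hne
    rw [Finset.not_nonempty_iff_eq_empty] at hne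
    have hall : ∀ i, μ i = β₁ := by
      intro i
      by_contra hi
      have hiT : i ∈ T := by simp [hT, hi]
      rw [hne] at hiT
      exact absurd hiT (Finset.notMem_empty i)
    have htop : U₁ = ⊤ := by
      rw [Submodule.eq_top_iff']
      intro x
      rw [memU]
      intro i hi
      exact absurd (hall i) hi
    rw [htop, finrank_top, hrank] at hU₁
    exact lt_irrefl d hU₁
  set β₂ := T.inf' hTne μ with hβ₂def
  have hβ₂le : ∀ i, μ i ≠ β₁ → β₂ ≤ μ i := fun i hi => Finset.inf'_le μ (by simp [hT, hi])
  have hβ₂gt : β₁ < β₂ := by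
    obtain ⟨i₀, hi₀, h⟩ := Finset.exists_mem_eq_inf' hTne μ
    rw [hβ₂def, h]
    rcases lt_or_eq_of_le (hμge i₀) with h' | h'
    · exact h'
    · exfalso
      rw [hT, Finset.mem_filter] at hi₀
      exact hi₀.2 h'.symm
  have hβ₂pos : (0 : ℝ) < β₂ := lt_trans hβ1pos hβ₂gt
  -- there exists an index with the minimal eigenvalue
  have hSne : ∃ i, μ i = β₁ := by
    obtain ⟨v, hv⟩ := hβ₁.exists_hasEigenvector
    by_contra hno
    push_neg at hno
    have hz : ∀ i, b.repr v i = 0 := fun i => (memU v).mp hv.1 i (hno i)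
    have hrv : b.repr v = 0 := by
      ext i
      exact hz i
    exact hv.2 (by simpa using b.repr.map_eq_zero_iff.mp hrv)
  refine ⟨hGmeas, fun r hr => ?_⟩
  -- ratio of eigenvalues
  set q : ℝ := β₁ / β₂ with hq
  have hq0 : 0 < q := div_pos hβ1pos hβ₂pos
  have hq1 : q < 1 := (div_lt_one hβ₂pos).mpr hβ₂gt
  set m := (Finset.univ.filter (fun i : Fin d => μ i = β₁)).card with hm
  have hm1 : 1 ≤ m := by
    obtain ⟨i, hi⟩ := hSne
    exact Finset.card_pos.mpr ⟨i, by simp [hi]⟩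
  have hd0 : (0 : ℝ) < Real.sqrt d := Real.sqrt_pos.mpr (by exact_mod_cast hd)
  set C : ℝ := (2 * Real.sqrt d / δ) ^ m * (2 * Real.sqrt d) ^ (d - m) with hC
  have hCpos : 0 < C := mul_pos (pow_pos (div_pos (by linarith) hδ) m) (pow_pos (by linarith) _)
  -- the boxes
  set cbox : ℕ → Fin d → ℝ :=
    fun j i => if μ i = β₁ then r / (δ * β₂ ^ j) else r / μ i ^ j with hcbox
  set cinner : ℕ → Fin d → ℝ := fun j i => r / (2 * Real.sqrt d * μ i ^ j) with hcinner
  have hcboxpos : ∀ j i, 0 < cbox j i := by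
    intro j i
    simp only [hcbox]
    split_ifs
    · exact div_pos hr (mul_pos hδ (pow_pos hβ₂pos j))
    · exact div_pos hr (pow_pos (hμpos i) j)
  have hcinnerpos : ∀ j i, 0 < cinner j i := by
    intro j i
    exact div_pos hr (mul_pos (by linarith) (pow_pos (hμpos i) j))
  -- the key real product inequality
  have hkey : ∀ j : ℕ, (∏ i, (2 * cbox j i)) ≤ (C * q ^ j) * ∏ i, (2 * cinner j i) := by
    intro j
    have hfac : ∀ i, 2 * cbox j i =
        (if μ i = β₁ then 2 * Real.sqrt d / δ * q ^ j else 2 * Real.sqrt d) *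
          (2 * cinner j i) := by
      intro i
      simp only [hcbox, hcinner]
      have hμj : μ i ^ j ≠ 0 := (pow_pos (hμpos i) j).ne'
      have hβ₂j : β₂ ^ j ≠ 0 := (pow_pos hβ₂pos j).ne'
      have hβ₁j : β₁ ^ j ≠ 0 := (pow_pos hβ1pos j).ne'
      split_ifs with h
      · rw [hq, h, div_pow]
        field_simp
      · field_simp
    rw [Finset.prod_congr rfl (fun i _ => hfac i), Finset.prod_mul_distrib]
    have hcard : (Finset.univ.filter (fun i : Fin d => ¬ μ i = β₁)).card = d - m := by
      have hsum := Finset.card_filter_add_card_filter_not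
        (s := (Finset.univ : Finset (Fin d))) (p := fun i => μ i = β₁)
      rw [Finset.card_univ, Fintype.card_fin] at hsum
      omega
    have hratio : (∏ i, (if μ i = β₁ then 2 * Real.sqrt d / δ * q ^ j else 2 * Real.sqrt d))
        ≤ C * q ^ j := by
      rw [Finset.prod_ite, Finset.prod_const, Finset.prod_const, ← hm, hcard]
      have hqm : (q ^ j) ^ m ≤ q ^ j := by
        rw [← pow_mul]
        exact pow_le_pow_of_le_one hq0.le hq1.le (Nat.le_mul_of_pos_right j (by omega))
      have hexp : (2 * Real.sqrt d / δ * q ^ j) ^ m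
          = (2 * Real.sqrt d / δ) ^ m * (q ^ j) ^ m := mul_pow _ _ m
      rw [hexp, hC]
      calc (2 * Real.sqrt d / δ) ^ m * (q ^ j) ^ m * (2 * Real.sqrt d) ^ (d - m)
          ≤ (2 * Real.sqrt d / δ) ^ m * q ^ j * (2 * Real.sqrt d) ^ (d - m) := by
            have h1 : (0:ℝ) ≤ (2 * Real.sqrt d / δ) ^ m :=
              (pow_pos (div_pos (by linarith) hδ) m).le
            have h2 : (0:ℝ) ≤ (2 * Real.sqrt d) ^ (d - m) := (pow_pos (by linarith) _).le
            exact mul_le_mul_of_nonneg_right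
              (mul_le_mul_of_nonneg_left hqm h1) h2
        _ = (2 * Real.sqrt d / δ) ^ m * (2 * Real.sqrt d) ^ (d - m) * q ^ j := by ring
    refine mul_le_mul_of_nonneg_right hratio ?_
    exact Finset.prod_nonneg fun i _ => by have := hcinnerpos j i; linarith
  -- inclusions
  have hIsub : ∀ j : ℕ, {x : EuclideanSpace ℝ (Fin d) | ∀ i, |b.repr x i| ≤ cinner j i} ⊆
      ⇑(A ^ j) ⁻¹' ball (0 : EuclideanSpace ℝ (Fin d)) r := by
    intro j x hx
    rw [Set.mem_preimage, mem_ball_zero_iff]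
    have hdpos : (0:ℝ) < (d:ℝ) := by exact_mod_cast hd
    have hsq : ‖(A ^ j) x‖ ^ 2 ≤ (r / 2) ^ 2 := by
      rw [hnormsq]
      have hbound : ∀ i : Fin d, (b.repr ((A ^ j) x) i) ^ 2 ≤ (r / (2 * Real.sqrt d)) ^ 2 := by
        intro i
        rw [hpow]
        have hci : |b.repr x i| ≤ r / (2 * Real.sqrt d * μ i ^ j) := hx i
        have h2 : (b.repr x i) ^ 2 ≤ (r / (2 * Real.sqrt d * μ i ^ j)) ^ 2 := by
          rw [← sq_abs]
          exact pow_le_pow_left₀ (abs_nonneg _) hci 2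
        have h3 : (μ i ^ j * b.repr x i) ^ 2 = (μ i ^ j) ^ 2 * (b.repr x i) ^ 2 := by ring
        rw [h3]
        refine le_trans (mul_le_mul_of_nonneg_left h2 (sq_nonneg _)) (le_of_eq ?_)
        have hμj : μ i ^ j ≠ 0 := (pow_pos (hμpos i) j).ne'
        field_simp
      calc ∑ i, (b.repr ((A ^ j) x) i) ^ 2 ≤ ∑ _i : Fin d, (r / (2 * Real.sqrt d)) ^ 2 :=
            Finset.sum_le_sum fun i _ => hbound i
        _ = d * (r / (2 * Real.sqrt d)) ^ 2 := by
            rw [Finset.sum_const, Finset.card_univ, Fintype.card_fin, nsmul_eq_mul]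
        _ = (r / 2) ^ 2 := by
            have hs : Real.sqrt d ^ 2 = (d:ℝ) := Real.sq_sqrt hdpos.le
            have hdne : (d:ℝ) ≠ 0 := hdpos.ne'
            rw [div_pow, mul_pow, hs, div_pow]
            field_simp
    have h5 := abs_le_of_sq_le_sq hsq (by linarith)
    rw [abs_norm] at h5
    linarith
  have hOsub : ∀ j : ℕ, (⇑(A ^ j) ⁻¹' ball (0 : EuclideanSpace ℝ (Fin d)) r) \ G ⊆
      {x : EuclideanSpace ℝ (Fin d) | ∀ i, |b.repr x i| ≤ cbox j i} := by
    intro j x hx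
    obtain ⟨hxE, hxG⟩ := hx
    rw [Set.mem_preimage, mem_ball_zero_iff] at hxE
    have hsum : ∑ i, (μ i ^ j * b.repr x i) ^ 2 < r ^ 2 := by
      have h1 : ‖(A ^ j) x‖ ^ 2 < r ^ 2 := pow_lt_pow_left₀ hxE (norm_nonneg _) two_ne_zero
      rw [hnormsq] at h1
      refine lt_of_le_of_lt (le_of_eq ?_) h1
      exact (Finset.sum_congr rfl fun i _ => by rw [hpow]).symm
    have hβ₂jpos : (0:ℝ) < β₂ ^ j := pow_pos hβ₂pos j
    -- the orthogonal part is small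
    have hz : ‖x - P x‖ ≤ r / β₂ ^ j := by
      have hzsq : (β₂ ^ j * ‖x - P x‖) ^ 2 ≤ r ^ 2 := by
        have he : ∀ i, b.repr (x - P x) i = if μ i = β₁ then 0 else b.repr x i := by
          intro i
          rw [map_sub]
          simp only [PiLp.sub_apply]
          rw [hPrepr]
          split_ifs with h
          · rw [sub_self]
          · rw [sub_zero]
        have h2 : (β₂ ^ j * ‖x - P x‖) ^ 2 = ∑ i, (β₂ ^ j) ^ 2 * (b.repr (x - P x) i) ^ 2 := by
          rw [mul_pow, hnormsq, Finset.mul_sum]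
        rw [h2]
        refine le_trans (Finset.sum_le_sum fun i _ => ?_) hsum.le
        rw [he i]
        split_ifs with h
        · simp [sq_nonneg]
        · have hle : β₂ ^ j ≤ μ i ^ j := pow_le_pow_left₀ hβ₂pos.le (hβ₂le i h) j
          have hmm : (μ i ^ j * b.repr x i) ^ 2 = (μ i ^ j) ^ 2 * (b.repr x i) ^ 2 := by ring
          rw [hmm]
          refine mul_le_mul_of_nonneg_right ?_ (sq_nonneg _)
          exact pow_le_pow_left₀ hβ₂jpos.le hle 2
      have h3 := abs_le_of_sq_le_sq hzsq hr.le
      rw [abs_of_nonneg (by positivity)] at h3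
      rw [le_div_iff₀ hβ₂jpos]
      linarith
    -- the projection part is small
    have hnotlt : δ * ‖P x‖ ≤ ‖x - P x‖ :=
      le_of_not_gt fun hcon => hxG ((hGiff x).mpr hcon)
    have hPxb : ‖P x‖ ≤ r / (δ * β₂ ^ j) := by
      rw [le_div_iff₀ (mul_pos hδ hβ₂jpos)]
      have h4 : δ * ‖P x‖ ≤ r / β₂ ^ j := le_trans hnotlt hz
      rw [le_div_iff₀ hβ₂jpos] at h4
      nlinarith
    intro i
    simp only [hcbox]
    split_ifs with h
    · have hc : b.repr x i = b.repr (P x) i := by rw [hPrepr, if_pos h]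
      rw [hc]
      have h6 : (b.repr (P x) i) ^ 2 ≤ ‖P x‖ ^ 2 := by
        rw [hnormsq]
        exact Finset.single_le_sum (f := fun i => (b.repr (P x) i) ^ 2)
          (fun i _ => sq_nonneg _) (Finset.mem_univ i)
      have h7 : |b.repr (P x) i| ≤ ‖P x‖ :=
        abs_le_of_sq_le_sq h6 (norm_nonneg _)
      exact le_trans h7 hPxb
    · have h8 : (μ i ^ j * b.repr x i) ^ 2 ≤ r ^ 2 :=
        le_of_lt (lt_of_le_of_lt (Finset.single_le_sum
          (f := fun i => (μ i ^ j * b.repr x i) ^ 2)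
          (fun i _ => sq_nonneg _) (Finset.mem_univ i)) hsum)
      have h9 : |μ i ^ j * b.repr x i| ≤ r := abs_le_of_sq_le_sq h8 hr.le
      rw [abs_mul, abs_of_pos (pow_pos (hμpos i) j)] at h9
      rw [le_div_iff₀ (pow_pos (hμpos i) j)]
      linarith [h9, mul_comm (μ i ^ j) |b.repr x i|]
  have hEb : ∀ j : ℕ, (⇑(A ^ j) ⁻¹' ball (0 : EuclideanSpace ℝ (Fin d)) r) ⊆
      ball (0 : EuclideanSpace ℝ (Fin d)) r := by
    intro j x hx
    rw [Set.mem_preimage, mem_ball_zero_iff] at hx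
    rw [mem_ball_zero_iff]
    have hxx : ‖x‖ ^ 2 ≤ ‖(A ^ j) x‖ ^ 2 := by
      rw [hnormsq, hnormsq]
      refine Finset.sum_le_sum fun i _ => ?_
      rw [hpow]
      have h1 : 1 ≤ μ i ^ j := one_le_pow₀ (hμ1 i)
      have h1' : 1 ≤ (μ i ^ j) ^ 2 := one_le_pow₀ h1
      nlinarith [h1', sq_nonneg (b.repr x i)]
    have h2 := abs_le_of_sq_le_sq hxx (norm_nonneg _)
    rw [abs_norm] at h2
    linarith
  -- volume facts
  set V : ℕ → ENNReal := fun j => volume (⇑(A ^ j) ⁻¹' ball (0 : EuclideanSpace ℝ (Fin d)) r)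
    with hV
  have hVfin : ∀ j, V j ≠ ⊤ :=
    fun j => ne_top_of_le_ne_top measure_ball_lt_top.ne (measure_mono (hEb j))
  have hVpos : ∀ j, 0 < V j := by
    intro j
    refine lt_of_lt_of_le ?_ (measure_mono (hIsub j))
    rw [boxVol]
    refine CanonicallyOrderedAdd.prod_pos.mpr fun i _ => ?_
    exact ENNReal.ofReal_pos.mpr (by have := hcinnerpos j i; linarith)
  have hW : ∀ j, volume ((⇑(A ^ j) ⁻¹' ball (0 : EuclideanSpace ℝ (Fin d)) r) \ G) / V j ≤
      ENNReal.ofReal (C * q ^ j) := by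
    intro j
    refine ENNReal.div_le_of_le_mul ?_
    calc volume ((⇑(A ^ j) ⁻¹' ball (0 : EuclideanSpace ℝ (Fin d)) r) \ G)
        ≤ volume {x : EuclideanSpace ℝ (Fin d) | ∀ i, |b.repr x i| ≤ cbox j i} :=
          measure_mono (hOsub j)
      _ ≤ ENNReal.ofReal (C * q ^ j) *
          volume {x : EuclideanSpace ℝ (Fin d) | ∀ i, |b.repr x i| ≤ cinner j i} := by
          rw [boxVol, boxVol]
          rw [← ENNReal.ofReal_prod_of_nonneg
            (fun i _ => by have := hcboxpos j i; linarith)]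
          rw [← ENNReal.ofReal_prod_of_nonneg
            (fun i _ => by have := hcinnerpos j i; linarith)]
          rw [← ENNReal.ofReal_mul (by positivity)]
          exact ENNReal.ofReal_le_ofReal (hkey j)
      _ ≤ ENNReal.ofReal (C * q ^ j) * V j := by
          exact mul_le_mul_right (measure_mono (hIsub j)) _
  -- ratio identity
  have hsplit : ∀ j, volume (G ∩ ⇑(A ^ j) ⁻¹' ball (0 : EuclideanSpace ℝ (Fin d)) r) / V j =
      (1:ENNReal) - volume ((⇑(A ^ j) ⁻¹' ball (0 : EuclideanSpace ℝ (Fin d)) r) \ G) / V j := by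
    intro j
    have hdiffle : volume ((⇑(A ^ j) ⁻¹' ball (0 : EuclideanSpace ℝ (Fin d)) r) \ G) ≤ V j :=
      measure_mono Set.diff_subset
    have hfin2 : volume ((⇑(A ^ j) ⁻¹' ball (0 : EuclideanSpace ℝ (Fin d)) r) \ G) ≠ ⊤ :=
      ne_top_of_le_ne_top (hVfin j) hdiffle
    have hadd : volume ((⇑(A ^ j) ⁻¹' ball (0 : EuclideanSpace ℝ (Fin d)) r) ∩ G) +
        volume ((⇑(A ^ j) ⁻¹' ball (0 : EuclideanSpace ℝ (Fin d)) r) \ G) = V j :=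
      measure_inter_add_diff _ hGmeas
    have hGE : volume (G ∩ ⇑(A ^ j) ⁻¹' ball (0 : EuclideanSpace ℝ (Fin d)) r) =
        V j - volume ((⇑(A ^ j) ⁻¹' ball (0 : EuclideanSpace ℝ (Fin d)) r) \ G) := by
      rw [Set.inter_comm]
      exact ENNReal.eq_sub_of_add_eq hfin2 hadd
    rw [hGE, ENNReal.sub_div fun _ _ => (hVpos j).ne', ENNReal.div_self (hVpos j).ne' (hVfin j)]
  -- conclusion
  have hW0 : Tendsto (fun j =>
      volume ((⇑(A ^ j) ⁻¹' ball (0 : EuclideanSpace ℝ (Fin d)) r) \ G) / V j)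
      atTop ((𝓝 0) : Filter ENNReal) := by
    have hup : Tendsto (fun j : ℕ => ENNReal.ofReal (C * q ^ j)) atTop (𝓝 0) := by
      have hre : Tendsto (fun j : ℕ => C * q ^ j) atTop (𝓝 0) := by
        have := (tendsto_pow_atTop_nhds_zero_of_lt_one hq0.le hq1).const_mul C
        simpa using this
      have := (ENNReal.continuous_ofReal.tendsto 0).comp hre
      simpa [Function.comp_def] using this
    exact tendsto_of_tendsto_of_tendsto_of_le_of_le tendsto_const_nhds hup
      (fun j => zero_le) hW
  have hfinal : Tendsto (fun j : ℕ =>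
      volume (G ∩ ⇑(A ^ j) ⁻¹' ball (0 : EuclideanSpace ℝ (Fin d)) r) / V j) atTop (𝓝 1) := by
    have h1 : Tendsto (fun j : ℕ => (1 : ENNReal) -
        volume ((⇑(A ^ j) ⁻¹' ball (0 : EuclideanSpace ℝ (Fin d)) r) \ G) / V j)
        atTop (𝓝 (1 - 0)) :=
      ENNReal.Tendsto.sub tendsto_const_nhds hW0 (Or.inl ENNReal.one_ne_top)
    rw [tsub_zero] at h1
    exact h1.congr fun j => (hsplit j).symm
  exact hfinal
end
end

section
/- Let A : ℝ^d → ℝ^d be a positive expansive linear map with distinct eigenvalues 1 < β₁ < … < β_k, and let U₁ be the eigenspace of A for the smallest eigenvalue β₁. Let V ⊆ U₁⊥ be any subspace orthogonal to U₁, and let W := (U₁ ⊕ V)⊥. For δ > 0 define F_δ := {x = u + v + w : u ∈ U₁, v ∈ V, w ∈ W, ‖v‖ < δ‖u‖}. Then F_δ ∈ 𝓔_A. -/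
open MeasureTheory Filter Metric Topology
open scoped RealInnerProductSpace ENNReal

noncomputable section

/-- Characterization of the cone-like set `F` via orthogonal projections. -/
theorem char_lemma {d : ℕ} (U₁ V : Submodule ℝ (EuclideanSpace ℝ (Fin d))) (hV : V ≤ U₁ᗮ)
    (δ : ℝ) :
    {x : EuclideanSpace ℝ (Fin d) | ∃ u ∈ U₁, ∃ v ∈ V, ∃ w ∈ (U₁ ⊔ V)ᗮ,
      x = u + v + w ∧ ‖v‖ < δ * ‖u‖}
    = {x | ‖(Submodule.orthogonalProjectionOnto V x : EuclideanSpace ℝ (Fin d))‖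
        < δ * ‖(Submodule.orthogonalProjectionOnto U₁ x : EuclideanSpace ℝ (Fin d))‖} := by
  have hUV : U₁ ≤ Vᗮ := by
    intro u hu
    rw [Submodule.mem_orthogonal]
    intro v hv
    have := hV hv
    rw [Submodule.mem_orthogonal] at this
    rw [real_inner_comm]
    exact this u hu
  ext x
  simp only [Set.mem_setOf_eq]
  constructor
  · rintro ⟨u, hu, v, hv, w, hw, rfl, hlt⟩
    have hwV : w ∈ Vᗮ := Submodule.orthogonal_le le_sup_right hw
    have hwU : w ∈ U₁ᗮ := Submodule.orthogonal_le le_sup_left hw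
    have h1 : (Submodule.orthogonalProjectionOnto V (u + v + w) : EuclideanSpace ℝ (Fin d)) = v := by
      rw [map_add, map_add,
        Submodule.orthogonalProjectionOnto_apply_of_mem_orthogonal (hUV hu),
        Submodule.orthogonalProjectionOnto_apply_of_mem_orthogonal hwV]
      simp only [zero_add, add_zero]
      exact Submodule.starProjection_eq_self_iff.mpr hv
    have h2 : (Submodule.orthogonalProjectionOnto U₁ (u + v + w) : EuclideanSpace ℝ (Fin d)) = u := by
      rw [map_add, map_add,
        Submodule.orthogonalProjectionOnto_apply_of_mem_orthogonal (hV hv),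
        Submodule.orthogonalProjectionOnto_apply_of_mem_orthogonal hwU]
      simp only [zero_add, add_zero]
      exact Submodule.starProjection_eq_self_iff.mpr hu
    rw [h1, h2]; exact hlt
  · intro h
    set u : EuclideanSpace ℝ (Fin d) := ↑(Submodule.orthogonalProjectionOnto U₁ x) with hu
    set v : EuclideanSpace ℝ (Fin d) := ↑(Submodule.orthogonalProjectionOnto V x) with hv
    have hw1 : x - u - v ∈ U₁ᗮ := by
      have h1 : x - u ∈ U₁ᗮ := Submodule.sub_starProjection_mem_orthogonal x
      have h2 : v ∈ U₁ᗮ := hV (Submodule.coe_mem _)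
      exact Submodule.sub_mem _ h1 h2
    have hw2 : x - u - v ∈ Vᗮ := by
      have h1 : x - v ∈ Vᗮ := Submodule.sub_starProjection_mem_orthogonal x
      have h2 : u ∈ Vᗮ := hUV (Submodule.coe_mem _)
      have : x - u - v = x - v - u := by abel
      rw [this]
      exact Submodule.sub_mem _ h1 h2
    refine ⟨u, Submodule.coe_mem _, v, Submodule.coe_mem _, x - u - v, ?_, by abel, h⟩
    rw [Submodule.mem_orthogonal]
    intro y hy
    rw [Submodule.mem_sup] at hy
    obtain ⟨a, ha, b, hb, rfl⟩ := hy
    rw [inner_add_left]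
    rw [Submodule.mem_orthogonal] at hw1 hw2
    rw [hw1 a ha, hw2 b hb, add_zero]

/-- Lower bound for a symmetric operator via the minimal Rayleigh quotient. -/
theorem rayleigh_bound {F : Type*} [NormedAddCommGroup F] [InnerProductSpace ℝ F]
    [FiniteDimensional ℝ F] [Nontrivial F] (B : F →ₗ[ℝ] F) (hB : B.IsSymmetric) :
    ∃ c : ℝ, Module.End.HasEigenvalue B c ∧ ∀ y : F, c * ‖y‖ ^ 2 ≤ ⟪B y, y⟫ := by
  set Bc := LinearMap.toContinuousLinearMap B with hBc
  have hbdd : BddBelow (Set.range fun y : { y : F // y ≠ 0 } =>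
      RCLike.re ⟪B y, (y : F)⟫ / ‖(y : F)‖ ^ 2) := by
    refine ⟨-‖Bc‖, ?_⟩
    rintro t ⟨y, rfl⟩
    have hy0 : (0:ℝ) < ‖(y : F)‖ := by simpa [norm_pos_iff] using y.2
    have h1 : |⟪B y, (y : F)⟫| ≤ ‖Bc‖ * ‖(y:F)‖ ^ 2 := by
      calc |⟪B y, (y : F)⟫| ≤ ‖B (y : F)‖ * ‖(y:F)‖ := abs_real_inner_le_norm _ _
      _ ≤ (‖Bc‖ * ‖(y:F)‖) * ‖(y:F)‖ := by
          have : ‖B (y : F)‖ ≤ ‖Bc‖ * ‖(y:F)‖ := by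
            simpa [hBc] using Bc.le_opNorm (y : F)
          nlinarith [norm_nonneg (y : F)]
      _ = ‖Bc‖ * ‖(y:F)‖ ^ 2 := by ring
    simp only [RCLike.re_to_real]
    rw [le_div_iff₀ (by positivity)]
    nlinarith [neg_abs_le ⟪B y, (y : F)⟫]
  refine ⟨⨅ y : { y : F // y ≠ 0 }, RCLike.re ⟪B y, (y : F)⟫ / ‖(y : F)‖ ^ 2,
    hB.hasEigenvalue_iInf_of_finiteDimensional, ?_⟩
  intro y
  by_cases hy0 : y = 0
  · simp [hy0]
  · have hle := ciInf_le hbdd (⟨y, hy0⟩ : { y : F // y ≠ 0 })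
    have hynorm : (0:ℝ) < ‖y‖ := by simpa [norm_pos_iff] using hy0
    rw [le_div_iff₀ (by positivity)] at hle
    calc _ ≤ RCLike.re ⟪B y, y⟫ := hle
    _ = ⟪B y, y⟫ := RCLike.re_to_real

/-- The orthogonal complement of an eigenspace of a symmetric operator is invariant. -/
theorem perp_invariant {d : ℕ} (A : EuclideanSpace ℝ (Fin d) →ₗ[ℝ] EuclideanSpace ℝ (Fin d))
    (hsym : LinearMap.IsSymmetric A) (β₁ : ℝ) :
    ∀ y ∈ (Module.End.eigenspace A β₁)ᗮ, A y ∈ (Module.End.eigenspace A β₁)ᗮ := by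
  intro y hy
  rw [Submodule.mem_orthogonal] at hy ⊢
  intro u hu
  have hu' := hu
  rw [Module.End.mem_eigenspace_iff] at hu'
  rw [← hsym u y, hu', inner_smul_left, hy u hu, mul_zero]

/-- On the orthogonal complement of the minimal eigenspace, the symmetric operator `A`
expands norms by a factor `c` strictly larger than `β₁`. -/
theorem spec_lemma {d : ℕ} (A : EuclideanSpace ℝ (Fin d) →ₗ[ℝ] EuclideanSpace ℝ (Fin d))
    (hsym : LinearMap.IsSymmetric A)
    (β₁ : ℝ)
    (hmin : ∀ μ : ℝ, Module.End.HasEigenvalue A μ → β₁ ≤ μ) :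
    ∃ c : ℝ, β₁ < c ∧ ∀ y ∈ (Module.End.eigenspace A β₁)ᗮ, c * ‖y‖ ≤ ‖A y‖ := by
  set U := (Module.End.eigenspace A β₁)ᗮ with hU
  have hAU : ∀ y ∈ U, A y ∈ U := perp_invariant A hsym β₁
  by_cases hbot : U = ⊥
  · exact ⟨β₁ + 1, by linarith, fun y hy => by
      rw [hbot] at hy; simp only [Submodule.mem_bot] at hy; simp [hy]⟩
  haveI : Nontrivial U := Submodule.nontrivial_iff_ne_bot.mpr hbot
  set B : U →ₗ[ℝ] U := A.restrict hAU with hB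
  have hBsym : B.IsSymmetric := hsym.restrict_invariant hAU
  obtain ⟨c, hce, hcbound⟩ := rayleigh_bound B hBsym
  obtain ⟨y₀, hy₀⟩ := hce.exists_hasEigenvector
  have hy₀0 : (y₀ : EuclideanSpace ℝ (Fin d)) ≠ 0 := by
    simpa [Submodule.coe_eq_zero] using hy₀.right
  have hAy₀ : A (y₀ : EuclideanSpace ℝ (Fin d)) = c • (y₀ : EuclideanSpace ℝ (Fin d)) := by
    have h1 := hy₀.apply_eq_smul
    have h2 : ((B y₀ : U) : EuclideanSpace ℝ (Fin d))
        = ((c • y₀ : U) : EuclideanSpace ℝ (Fin d)) := by rw [h1]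
    simpa [hB, LinearMap.restrict_apply] using h2
  have hcA : Module.End.HasEigenvalue A c :=
    Module.End.hasEigenvalue_of_hasEigenvector
      ⟨Module.End.mem_eigenspace_iff.mpr hAy₀, hy₀0⟩
  have hcb : β₁ ≤ c := hmin c hcA
  have hcne : c ≠ β₁ := by
    intro hceq
    have hmem : (y₀ : EuclideanSpace ℝ (Fin d)) ∈ Module.End.eigenspace A β₁ := by
      rw [Module.End.mem_eigenspace_iff, hAy₀, hceq]
    have hmem2 : (y₀ : EuclideanSpace ℝ (Fin d)) ∈ (Module.End.eigenspace A β₁)ᗮ := y₀.2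
    rw [Submodule.mem_orthogonal] at hmem2
    have h0 := hmem2 _ hmem
    rw [real_inner_self_eq_norm_sq] at h0
    exact hy₀0 (by
      have := (pow_eq_zero_iff (n := 2) (by norm_num)).mp
        (by linarith [h0] : ‖(y₀ : EuclideanSpace ℝ (Fin d))‖ ^ 2 = 0)
      simpa [norm_eq_zero] using this)
  refine ⟨c, lt_of_le_of_ne hcb (Ne.symm hcne), ?_⟩
  intro y hy
  set yU : U := ⟨y, hy⟩ with hyU
  have h2 := hcbound yU
  have hinner : ⟪B yU, yU⟫ = ⟪A y, y⟫ := rfl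
  rw [hinner] at h2
  have h3 : ⟪A y, y⟫ ≤ ‖A y‖ * ‖y‖ := real_inner_le_norm _ _
  have h4 : ‖yU‖ = ‖y‖ := rfl
  rw [h4] at h2
  by_cases hy0 : y = 0
  · simp [hy0]
  · have hynorm : (0:ℝ) < ‖y‖ := by simpa [norm_pos_iff] using hy0
    nlinarith

theorem mem_pow_invariant {d : ℕ} (A : EuclideanSpace ℝ (Fin d) →ₗ[ℝ] EuclideanSpace ℝ (Fin d))
    (U : Submodule ℝ (EuclideanSpace ℝ (Fin d))) (hAU : ∀ y ∈ U, A y ∈ U) :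
    ∀ j : ℕ, ∀ y ∈ U, (A ^ j) y ∈ U := by
  intro j
  induction j with
  | zero => intro y hy; simpa using hy
  | succ n ih =>
    intro y hy
    rw [pow_succ, Module.End.mul_apply]
    exact ih _ (hAU y hy)

theorem pow_lower {d : ℕ} (A : EuclideanSpace ℝ (Fin d) →ₗ[ℝ] EuclideanSpace ℝ (Fin d))
    (U : Submodule ℝ (EuclideanSpace ℝ (Fin d))) (hAU : ∀ y ∈ U, A y ∈ U)
    (c : ℝ) (hc : 0 ≤ c) (hbound : ∀ y ∈ U, c * ‖y‖ ≤ ‖A y‖) :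
    ∀ j : ℕ, ∀ y ∈ U, c ^ j * ‖y‖ ≤ ‖(A ^ j) y‖ := by
  intro j
  induction j with
  | zero => intro y hy; simp
  | succ n ih =>
    intro y hy
    conv_rhs => rw [pow_succ, Module.End.mul_apply]
    calc c ^ (n + 1) * ‖y‖ = c ^ n * (c * ‖y‖) := by rw [pow_succ]; ring
    _ ≤ c ^ n * ‖A y‖ := by
        have := hbound y hy
        nlinarith [pow_nonneg hc n]
    _ ≤ ‖(A ^ n) (A y)‖ := ih _ (hAU y hy)

theorem proj_pow {d : ℕ} (A : EuclideanSpace ℝ (Fin d) →ₗ[ℝ] EuclideanSpace ℝ (Fin d))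
    (β₁ : ℝ)
    (hAperp : ∀ y ∈ (Module.End.eigenspace A β₁)ᗮ, A y ∈ (Module.End.eigenspace A β₁)ᗮ) :
    ∀ (j : ℕ) (x : EuclideanSpace ℝ (Fin d)),
      (Submodule.orthogonalProjectionOnto (Module.End.eigenspace A β₁) ((A ^ j) x)
        : EuclideanSpace ℝ (Fin d))
      = β₁ ^ j • (Submodule.orthogonalProjectionOnto (Module.End.eigenspace A β₁) x
        : EuclideanSpace ℝ (Fin d)) := by
  set U₁ := Module.End.eigenspace A β₁ with hU₁
  have key : ∀ z : EuclideanSpace ℝ (Fin d),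
      (Submodule.orthogonalProjectionOnto U₁ (A z) : EuclideanSpace ℝ (Fin d))
      = β₁ • (Submodule.orthogonalProjectionOnto U₁ z : EuclideanSpace ℝ (Fin d)) := by
    intro z
    have hz : z = (Submodule.orthogonalProjectionOnto U₁ z : EuclideanSpace ℝ (Fin d))
        + (z - Submodule.orthogonalProjectionOnto U₁ z) := by abel
    have h1 : A ((Submodule.orthogonalProjectionOnto U₁ z : EuclideanSpace ℝ (Fin d)))
        = β₁ • (Submodule.orthogonalProjectionOnto U₁ z : EuclideanSpace ℝ (Fin d)) := by
      have := (Submodule.orthogonalProjectionOnto U₁ z).2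
      rwa [Module.End.mem_eigenspace_iff] at this
    have h2 : A (z - (Submodule.orthogonalProjectionOnto U₁ z : EuclideanSpace ℝ (Fin d))) ∈ U₁ᗮ :=
      hAperp _ (Submodule.sub_starProjection_mem_orthogonal z)
    conv_lhs => rw [hz]
    rw [map_add, map_add, h1,
      Submodule.orthogonalProjectionOnto_apply_of_mem_orthogonal h2]
    rw [add_zero, _root_.map_smul]
    simp only [Submodule.coe_smul, Submodule.orthogonalProjectionOnto_mem_subspace_eq_self]
  intro j
  induction j with
  | zero => intro x; simp
  | succ n ih =>
    intro x
    conv_lhs => rw [pow_succ', Module.End.mul_apply]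
    rw [key, ih, smul_smul, ← pow_succ']
set_option maxHeartbeats 1000000 in
theorem stmt_11 {d : ℕ} (hd : 1 ≤ d)
    (A : EuclideanSpace ℝ (Fin d) →ₗ[ℝ] EuclideanSpace ℝ (Fin d))
    (hsym : LinearMap.IsSymmetric A)
    (heig : ∀ μ : ℝ, Module.End.HasEigenvalue A μ → 1 < μ)
    (β₁ : ℝ) (hβ₁ : Module.End.HasEigenvalue A β₁)
    (hmin : ∀ μ : ℝ, Module.End.HasEigenvalue A μ → β₁ ≤ μ)
    (V : Submodule ℝ (EuclideanSpace ℝ (Fin d)))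
    (hV : V ≤ (Module.End.eigenspace A β₁)ᗮ)
    (δ : ℝ) (hδ : 0 < δ)
    (F : Set (EuclideanSpace ℝ (Fin d)))
    (hF : F = {x | ∃ u ∈ Module.End.eigenspace A β₁, ∃ v ∈ V,
        ∃ w ∈ (Module.End.eigenspace A β₁ ⊔ V)ᗮ, x = u + v + w ∧ ‖v‖ < δ * ‖u‖}) :
    F ∈ densityFamily A := by
  set U₁ := Module.End.eigenspace A β₁ with hU₁def
  have hβ₁1 : 1 < β₁ := heig β₁ hβ₁
  have hβ₁pos : 0 < β₁ := by linarith
  have hFc : F = {x | ‖(Submodule.orthogonalProjectionOnto V x : EuclideanSpace ℝ (Fin d))‖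
      < δ * ‖(Submodule.orthogonalProjectionOnto U₁ x : EuclideanSpace ℝ (Fin d))‖} := by
    rw [hF]; exact char_lemma U₁ V hV δ
  have hcontV : Continuous fun x : EuclideanSpace ℝ (Fin d) =>
      ‖(Submodule.orthogonalProjectionOnto V x : EuclideanSpace ℝ (Fin d))‖ :=
    (continuous_subtype_val.comp (Submodule.orthogonalProjectionOnto V).continuous).norm
  have hcontU : Continuous fun x : EuclideanSpace ℝ (Fin d) =>
      ‖(Submodule.orthogonalProjectionOnto U₁ x : EuclideanSpace ℝ (Fin d))‖ :=
    (continuous_subtype_val.comp (Submodule.orthogonalProjectionOnto U₁).continuous).norm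
  have hFmeas : MeasurableSet F := by
    rw [hFc]
    exact measurableSet_lt hcontV.measurable (hcontU.measurable.const_mul δ)
  refine ⟨hFmeas, ?_⟩
  intro r hr
  -- determinant facts
  have hdetA : LinearMap.det A ≠ 0 := by
    intro h
    have hlt := LinearMap.bot_lt_ker_of_det_eq_zero h
    have h0 : Module.End.HasEigenvalue A 0 := by
      rw [Module.End.hasEigenvalue_iff, Module.End.eigenspace_zero]
      exact hlt.ne'
    linarith [heig 0 h0]
  have hdetj : ∀ j : ℕ, LinearMap.det (A ^ j) ≠ 0 := by
    intro j
    rw [map_pow]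
    exact pow_ne_zero _ hdetA
  set μB := volume (ball (0 : EuclideanSpace ℝ (Fin d)) r) with hμB
  have hB0 : μB ≠ 0 := (measure_ball_pos volume 0 hr).ne'
  have hBtop : μB ≠ ⊤ := measure_ball_lt_top.ne
  set k : ℕ → ℝ≥0∞ := fun j => ENNReal.ofReal |(LinearMap.det (A ^ j))⁻¹| with hk
  have hpre : ∀ (j : ℕ) (s : Set (EuclideanSpace ℝ (Fin d))),
      volume (⇑(A ^ j) ⁻¹' s) = k j * volume s := fun j s =>
    Measure.addHaar_preimage_linearMap volume (hdetj j) s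
  have hk0 : ∀ j, k j ≠ 0 := by
    intro j
    simp only [hk, ne_eq, ENNReal.ofReal_eq_zero, not_le]
    exact abs_pos.mpr (inv_ne_zero (hdetj j))
  have hktop : ∀ j, k j ≠ ⊤ := fun j => ENNReal.ofReal_ne_top
  set G : ℕ → Set (EuclideanSpace ℝ (Fin d)) :=
    fun j => ⇑(A ^ j) ⁻¹' ball (0 : EuclideanSpace ℝ (Fin d)) r with hG
  have hGvol : ∀ j, volume (G j) = k j * μB := fun j => hpre j _
  have hG0 : ∀ j, volume (G j) ≠ 0 := fun j => by
    rw [hGvol]; exact mul_ne_zero (hk0 j) hB0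
  have hGtop : ∀ j, volume (G j) ≠ ⊤ := fun j => by
    rw [hGvol]; exact ENNReal.mul_ne_top (hktop j) hBtop
  have hGmeas : ∀ j, MeasurableSet (G j) := fun j =>
    ((A ^ j).continuous_of_finiteDimensional.measurable) measurableSet_ball
  -- spectral facts
  obtain ⟨c, hc1, hcb⟩ := spec_lemma A hsym β₁ hmin
  have hcpos : 0 < c := lt_trans hβ₁pos hc1
  have hAperp := perp_invariant A hsym β₁
  have hq1 : β₁ / c < 1 := (div_lt_one hcpos).mpr hc1
  have hq0 : 0 ≤ β₁ / c := by positivity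
  set ε : ℕ → ℝ := fun j => (β₁ / c) ^ j * (r / δ) with hε
  set S : ℕ → Set (EuclideanSpace ℝ (Fin d)) := fun j =>
    ball (0 : EuclideanSpace ℝ (Fin d)) r
      ∩ {y | ‖(Submodule.orthogonalProjectionOnto U₁ y : EuclideanSpace ℝ (Fin d))‖ ≤ ε j} with hS
  have hUV : U₁ ≤ Vᗮ := by
    intro u hu
    rw [Submodule.mem_orthogonal]
    intro v hv
    have := hV hv
    rw [Submodule.mem_orthogonal] at this
    rw [real_inner_comm]
    exact this u hu
  have hAU₁ : ∀ u ∈ U₁, A u ∈ U₁ := by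
    intro u hu
    rw [hU₁def, Module.End.mem_eigenspace_iff] at hu ⊢
    rw [hu, _root_.map_smul, hu]
  -- the key inclusion
  have hsub : ∀ j, G j \ F ⊆ ⇑(A ^ j) ⁻¹' S j := by
    intro j x hx
    obtain ⟨hx1, hx2⟩ := hx
    rw [hFc] at hx2
    simp only [Set.mem_setOf_eq, not_lt] at hx2
    set px : EuclideanSpace ℝ (Fin d) := ↑(Submodule.orthogonalProjectionOnto U₁ x) with hpx
    set z : EuclideanSpace ℝ (Fin d) := x - px with hzdef
    have hz : z ∈ U₁ᗮ := Submodule.sub_starProjection_mem_orthogonal x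
    have e1 : ‖(Submodule.orthogonalProjectionOnto V x : EuclideanSpace ℝ (Fin d))‖ ≤ ‖z‖ := by
      have hxeq : x = px + z := by rw [hzdef]; abel
      have hsplit : (Submodule.orthogonalProjectionOnto V x : EuclideanSpace ℝ (Fin d))
          = ↑(Submodule.orthogonalProjectionOnto V z) := by
        conv_lhs => rw [hxeq]
        rw [map_add, Submodule.orthogonalProjectionOnto_apply_of_mem_orthogonal
          (hUV (Submodule.coe_mem _)), zero_add]
      rw [hsplit]
      have h1 : ‖Submodule.orthogonalProjectionOnto V z‖ ≤ ‖Submodule.orthogonalProjectionOnto V‖ * ‖z‖ :=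
        (Submodule.orthogonalProjectionOnto V).le_opNorm z
      have h2 : ‖Submodule.orthogonalProjectionOnto V‖ ≤ 1 := Submodule.orthogonalProjectionOnto_norm_le V
      calc ‖(Submodule.orthogonalProjectionOnto V z : EuclideanSpace ℝ (Fin d))‖
          = ‖Submodule.orthogonalProjectionOnto V z‖ := rfl
      _ ≤ ‖z‖ := by nlinarith [norm_nonneg z]
    have e2 : c ^ j * ‖z‖ ≤ ‖(A ^ j) z‖ := pow_lower A U₁ᗮ hAperp c hcpos.le hcb j z hz
    have hAz : (A ^ j) z ∈ U₁ᗮ := mem_pow_invariant A U₁ᗮ hAperp j z hz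
    have e3 : ‖(A ^ j) z‖ ≤ ‖(A ^ j) x‖ := by
      have hx' : (A ^ j) x = (A ^ j) px + (A ^ j) z := by
        rw [hzdef, map_sub]; abel
      have hmemU : (A ^ j) px ∈ U₁ :=
        mem_pow_invariant A U₁ hAU₁ j px (Submodule.coe_mem _)
      have hinner : ⟪(A ^ j) px, (A ^ j) z⟫ = 0 := by
        rw [Submodule.mem_orthogonal] at hAz
        exact hAz _ hmemU
      have hsq := norm_add_sq_real ((A ^ j) px) ((A ^ j) z)
      rw [hinner] at hsq
      rw [hx']
      nlinarith [norm_nonneg ((A ^ j) px), norm_nonneg ((A ^ j) z),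
        norm_nonneg ((A ^ j) px + (A ^ j) z)]
    have e4 : ‖(A ^ j) x‖ < r := by
      rw [hG, Set.mem_preimage, mem_ball_zero_iff] at hx1
      exact hx1
    have e5 : ‖(Submodule.orthogonalProjectionOnto U₁ ((A ^ j) x) : EuclideanSpace ℝ (Fin d))‖
        = β₁ ^ j * ‖px‖ := by
      rw [proj_pow A β₁ hAperp j x, norm_smul]
      rw [hpx]
      congr 1
      exact abs_of_pos (pow_pos hβ₁pos j)
    refine Set.mem_preimage.mpr ⟨?_, ?_⟩
    · exact mem_ball_zero_iff.mpr e4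
    · show ‖(Submodule.orthogonalProjectionOnto U₁ ((A ^ j) x) : EuclideanSpace ℝ (Fin d))‖ ≤ ε j
      rw [e5]
      have key : c ^ j * (δ * ‖px‖) ≤ r := by
        calc c ^ j * (δ * ‖px‖) ≤ c ^ j * ‖z‖ := by
              have := hx2.trans e1
              nlinarith [pow_nonneg hcpos.le j]
        _ ≤ ‖(A ^ j) z‖ := e2
        _ ≤ ‖(A ^ j) x‖ := e3
        _ ≤ r := e4.le
      have hεj : ε j = (β₁ / c) ^ j * (r / δ) := rfl
      rw [hεj, div_pow, div_mul_div_comm, le_div_iff₀ (by positivity)]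
      calc β₁ ^ j * ‖px‖ * (c ^ j * δ) = β₁ ^ j * (c ^ j * (δ * ‖px‖)) := by ring
      _ ≤ β₁ ^ j * r := by nlinarith [pow_pos hβ₁pos j]
  -- measure of S j tends to zero
  have hSmeas : ∀ j, MeasurableSet (S j) := fun j =>
    measurableSet_ball.inter (measurableSet_le hcontU.measurable measurable_const)
  have hSanti : Antitone S := by
    intro j m hjm
    intro y hy
    simp only [hS, Set.mem_inter_iff, Set.mem_setOf_eq] at hy ⊢
    refine ⟨hy.1, ?_⟩
    refine le_trans hy.2 ?_
    have : (β₁ / c) ^ m ≤ (β₁ / c) ^ j := pow_le_pow_of_le_one hq0 hq1.le hjm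
    have hrd : 0 ≤ r / δ := by positivity
    calc ε m = (β₁ / c) ^ m * (r / δ) := rfl
    _ ≤ (β₁ / c) ^ j * (r / δ) := mul_le_mul_of_nonneg_right this hrd
    _ = ε j := rfl
  have hU₁ne : U₁ ≠ ⊥ := Module.End.hasEigenvalue_iff.mp hβ₁
  have hInter : volume (⋂ j, S j) = 0 := by
    refine measure_mono_null ?_ (Measure.addHaar_submodule volume U₁ᗮ ?_)
    · intro y hy
      simp only [Set.mem_iInter] at hy
      have hyle : ∀ j, ‖(Submodule.orthogonalProjectionOnto U₁ y : EuclideanSpace ℝ (Fin d))‖ ≤ ε j :=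
        fun j => (hy j).2
      have hε0 : Tendsto ε atTop (𝓝 0) := by
        have h1 : Tendsto (fun j : ℕ => (β₁ / c) ^ j) atTop (𝓝 0) :=
          tendsto_pow_atTop_nhds_zero_of_lt_one hq0 hq1
        have := h1.mul_const (r / δ)
        simpa using this
      have hle0 : ‖(Submodule.orthogonalProjectionOnto U₁ y : EuclideanSpace ℝ (Fin d))‖ ≤ 0 :=
        ge_of_tendsto hε0 (Eventually.of_forall hyle)
      have hzero : Submodule.orthogonalProjectionOnto U₁ y = 0 := by
        have : ‖(Submodule.orthogonalProjectionOnto U₁ y : EuclideanSpace ℝ (Fin d))‖ = 0 :=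
          le_antisymm hle0 (norm_nonneg _)
        have : (Submodule.orthogonalProjectionOnto U₁ y : EuclideanSpace ℝ (Fin d)) = 0 :=
          norm_eq_zero.mp this
        exact Submodule.coe_eq_zero.mp this
      exact SetLike.mem_coe.mpr (Submodule.orthogonalProjectionOnto_eq_zero_iff.mp hzero)
    · intro htop
      exact hU₁ne ((Submodule.orthogonal_eq_top_iff U₁).mp htop)
  have hStend : Tendsto (fun j => volume (S j)) atTop (𝓝 0) := by
    have hfin : ∃ j, volume (S j) ≠ ⊤ :=
      ⟨0, ((measure_mono Set.inter_subset_left).trans_lt measure_ball_lt_top).ne⟩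
    have := tendsto_measure_iInter_atTop
      (fun j => (hSmeas j).nullMeasurableSet) hSanti hfin
    rw [hInter] at this
    exact this
  -- the ratio of bad parts tends to zero
  have hTend0 : Tendsto (fun j => volume (G j \ F) / volume (G j)) atTop (𝓝 0) := by
    have hub : ∀ j, volume (G j \ F) / volume (G j) ≤ volume (S j) / μB := by
      intro j
      have h1 : volume (G j \ F) ≤ k j * volume (S j) :=
        (measure_mono (hsub j)).trans (hpre j (S j)).le
      rw [hGvol j]
      calc volume (G j \ F) / (k j * μB) ≤ (k j * volume (S j)) / (k j * μB) :=
        ENNReal.div_le_div h1 le_rfl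
      _ = volume (S j) / μB := ENNReal.mul_div_mul_left _ _ (hk0 j) (hktop j)
    have hup : Tendsto (fun j => volume (S j) / μB) atTop (𝓝 0) := by
      have := ENNReal.Tendsto.div_const hStend (Or.inr hB0)
      simpa [ENNReal.zero_div] using this
    exact tendsto_of_tendsto_of_tendsto_of_le_of_le tendsto_const_nhds hup
      (fun j => zero_le) hub
  have hratio : ∀ j, volume (F ∩ G j) / volume (G j)
      = 1 - volume (G j \ F) / volume (G j) := by
    intro j
    have hdfin : volume (G j \ F) ≠ ⊤ :=
      ((measure_mono Set.diff_subset).trans_lt (hGtop j).lt_top).ne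
    have hdiff : volume (G j \ (G j \ F)) = volume (G j) - volume (G j \ F) :=
      measure_diff Set.diff_subset ((hGmeas j).diff hFmeas).nullMeasurableSet hdfin
    rw [Set.diff_diff_right_self, Set.inter_comm] at hdiff
    rw [hdiff, ENNReal.sub_div (fun _ _ => hG0 j), ENNReal.div_self (hG0 j) (hGtop j)]
  have final := ENNReal.Tendsto.sub
    (tendsto_const_nhds : Tendsto (fun _ : ℕ => (1 : ℝ≥0∞)) atTop (𝓝 1))
    hTend0 (Or.inl ENNReal.one_ne_top)
  rw [tsub_zero] at final
  exact final.congr (fun j => (hratio j).symm)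
end
end
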